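/- arXiv:2509.06919 — 5 statements merged into one kernel-verified Lean document; each statement's English description precedes it below -/
import Mathlib

section
/- Let q be a prime power, 0 < k ≤ n ≤ q+1, let α_1,…,α_{n−1} be distinct elements of F_q and b,c,λ,η ∈ F_q. The code RCTRS_{0,1}(α,b,c,λ,η) is MDS if and only if both of the following hold: (i) for every subset I ⊆ {1,…,n−1} of size k, (−1)^k η ∏_{i∈I} α_i ≠ 1; and (ii) for every subset J ⊆ {1,…,n−1} of size k−1, Φ_J(b) ≠ λ Φ_J(c). -/
open Polynomial Finset

noncomputable section

variable {F : Type*} [Field F]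

/-- The twisted polynomial `∑_{i<k} f_i x^i + η f_h x^{k-1+t}` from `V_{k,t,h,η}`. -/
def twPoly (k t h : ℕ) (η : F) (f : Fin k → F) : Polynomial F :=
  (∑ i : Fin k, Polynomial.C (f i) * Polynomial.X ^ (i : ℕ)) +
    Polynomial.C (η * if hh : h < k then f ⟨h, hh⟩ else 0) * Polynomial.X ^ (k - 1 + t)

/-- The coefficient `f_{k-1}` of a coefficient vector `f : Fin k → F`. -/
def topCoeffFin {k : ℕ} (f : Fin k → F) : F :=
  if hk : k - 1 < k then f ⟨k - 1, hk⟩ else 0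

/-- Codewords of the row-column twisted Reed-Solomon code. -/
def rctrsWords (k t h : ℕ) (η : F) {m : ℕ} (α : Fin m → F) (b c lam : F) :
    Set (Fin (m + 1) → F) :=
  { w | ∃ f : Fin k → F,
      w = Fin.snoc (fun i => (twPoly k t h η f).eval (α i))
            ((twPoly k t h η f).eval b - lam * (twPoly k t h η f).eval c) }

/-- The row-column twisted Reed-Solomon code `RCTRS_{h,t}(α,b,c,λ,η)`. -/
def RCTRS (k t h : ℕ) (η : F) {m : ℕ} (α : Fin m → F) (b c lam : F) :
    Submodule F (Fin (m + 1) → F) :=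
  Submodule.span F (rctrsWords k t h η α b c lam)

/-- Codewords of the extended row-column twisted Reed-Solomon code. -/
def rctrsWordsExt (k t h : ℕ) (η : F) {m : ℕ} (α : Fin m → F) (b c lam : F) :
    Set (Fin (m + 2) → F) :=
  { w | ∃ f : Fin k → F,
      w = Fin.snoc (Fin.snoc (fun i => (twPoly k t h η f).eval (α i))
            ((twPoly k t h η f).eval b - lam * (twPoly k t h η f).eval c)) (topCoeffFin f) }

/-- The extended row-column twisted Reed-Solomon code `RCTRS_{h,t}(α,b,c,λ,η,∞)`. -/
def RCTRSext (k t h : ℕ) (η : F) {m : ℕ} (α : Fin m → F) (b c lam : F) :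
    Submodule F (Fin (m + 2) → F) :=
  Submodule.span F (rctrsWordsExt k t h η α b c lam)

/-- Hamming weight. -/
def wt {n : ℕ} (x : Fin n → F) : ℕ := Nat.card {i : Fin n // x i ≠ 0}

/-- An `[n,k]` code is MDS if it has dimension `k` and minimum Hamming distance `n-k+1`. -/
def IsMDS {n : ℕ} (C : Submodule F (Fin n → F)) (k : ℕ) : Prop :=
  Module.finrank F C = k ∧ ∀ x ∈ C, x ≠ 0 → n - k + 1 ≤ wt x

/-- The Schur square of a code. -/
def schurSq {n : ℕ} (C : Submodule F (Fin n → F)) : Submodule F (Fin n → F) :=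
  Submodule.span F { w | ∃ x ∈ C, ∃ y ∈ C, w = x * y }

/-- Code equivalence: a permutation of coordinates followed by nonzero coordinatewise scaling. -/
def codeEquiv {n : ℕ} (C D : Submodule F (Fin n → F)) : Prop :=
  ∃ σ : Equiv.Perm (Fin n), ∃ v : Fin n → F, (∀ i, v i ≠ 0) ∧
    (C : Set (Fin n → F)) =
      (fun x : Fin n → F => fun i => v i * x (σ i)) '' (D : Set (Fin n → F))

/-- Generalized Reed-Solomon code. -/
def GRS (k : ℕ) {n : ℕ} (α v : Fin n → F) : Submodule F (Fin n → F) :=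
  Submodule.span F
    { w | ∃ f ∈ Polynomial.degreeLT F k, w = fun i => v i * Polynomial.eval (α i) f }

/-- Extended generalized Reed-Solomon code. -/
def GRSext (k : ℕ) {n : ℕ} (α v : Fin n → F) : Submodule F (Fin (n + 1) → F) :=
  Submodule.span F
    { w | ∃ f ∈ Polynomial.degreeLT F k,
        w = Fin.snoc (fun i => v i * Polynomial.eval (α i) f) (f.coeff (k - 1)) }

/-- A code of length `m+1` is non-RS if it is equivalent to no GRS and no extended GRS code. -/
def IsNonRS {m : ℕ} (C : Submodule F (Fin (m + 1) → F)) : Prop :=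
  (∀ (k' : ℕ) (α v : Fin (m + 1) → F), Function.Injective α → (∀ i, v i ≠ 0) →
      ¬ codeEquiv C (GRS k' α v)) ∧
  (∀ (k' : ℕ) (α v : Fin m → F), Function.Injective α → (∀ i, v i ≠ 0) →
      ¬ codeEquiv C (GRSext k' α v))

/-- Column twisted Reed-Solomon code. -/
def CTRS (k : ℕ) {m : ℕ} (α : Fin m → F) (b c lam : F) : Submodule F (Fin (m + 1) → F) :=
  Submodule.span F
    { w | ∃ f ∈ Polynomial.degreeLT F k,
        w = Fin.snoc (fun i => Polynomial.eval (α i) f)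
              (Polynomial.eval b f - lam * Polynomial.eval c f) }

/-- Extended column twisted Reed-Solomon code. -/
def CTRSext (k : ℕ) {m : ℕ} (α : Fin m → F) (b c lam : F) : Submodule F (Fin (m + 2) → F) :=
  Submodule.span F
    { w | ∃ f ∈ Polynomial.degreeLT F k,
        w = Fin.snoc (Fin.snoc (fun i => Polynomial.eval (α i) f)
              (Polynomial.eval b f - lam * Polynomial.eval c f)) (f.coeff (k - 1)) }

/-- `Φ_J(x) = ∏_{j∈J}(x−α_j)·(1 + (−1)^{|J|} η x ∏_{j∈J} α_j)`. -/
def PhiRC {m : ℕ} (α : Fin m → F) (η : F) (J : Finset (Fin m)) (x : F) : F :=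
  (∏ j ∈ J, (x - α j)) * (1 + (-1 : F) ^ J.card * η * x * ∏ j ∈ J, α j)

/-- `Ψ_J(x) = ∏_{j∈J}(x−α_j)·(1 + ηx + η Σ_{j∈J} α_j)`. -/
def PsiRC {m : ℕ} (α : Fin m → F) (η : F) (J : Finset (Fin m)) (x : F) : F :=
  (∏ j ∈ J, (x - α j)) * (1 + η * x + η * ∑ j ∈ J, α j)

/-- `Φ_{J,h}(x) = ∏_{j∈J}(x−α_j)·(1 + (−1)^{k−1−h} η σ_{k−h}(α_J, x))`. -/
def PhiRCh {m : ℕ} (α : Fin m → F) (η : F) (k h : ℕ) (J : Finset (Fin m)) (x : F) : F :=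
  (∏ j ∈ J, (x - α j)) *
    (1 + (-1 : F) ^ (k - 1 - h) * η * Multiset.esymm (x ::ₘ J.val.map α) (k - h))

/-- The image of a subgroup of `Fˣ` in `F`. -/
def unitsImage (G : Subgroup Fˣ) : Set F := (fun g : Fˣ => (g : F)) '' (G : Set Fˣ)

end

/-! The code is the image of the injective evaluation map on `V = V_{k,1,0,η}`, the
polynomials `g` with `deg g ≤ k` and `g_k = η g_0`, so it is MDS iff no nonzero `g ∈ V`
vanishes on `k` coordinates. If these are `k` of the points `α_i`, then `g` is a multiple of
`∏ (X - α_i)`, which lies in `V` iff `(-1)^k η ∏ α_i = 1`. If they are `k - 1` points `α_j`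
and the last coordinate, then `g = ∏ (X - α_j) · (vX + u)`, the twist forces
`v = (-1)^(k-1) η (∏ α_j) u`, i.e. `g = u Φ_J`, and the last coordinate is
`u (Φ_J(b) - λ Φ_J(c))`. -/

open Lagrange

section LinearCode

variable {F : Type*} [Field F]

lemma wt_eq_sub_card_zeros [DecidableEq F] {n : ℕ} (x : Fin n → F) :
    wt x = n - #{i | x i = 0} := by
  rw [wt, Nat.card_eq_fintype_card, Fintype.card_subtype, filter_not, card_sdiff_of_subset
    (subset_univ _), card_univ, Fintype.card_fin]

lemma le_wt_iff [DecidableEq F] {n k : ℕ} (hkn : k ≤ n) (x : Fin n → F) :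
    n - k + 1 ≤ wt x ↔ #{i | x i = 0} < k := by
  have : #{i | x i = 0} ≤ n := (card_filter_le _ _).trans (by simp)
  rw [wt_eq_sub_card_zeros]
  omega

theorem isMDS_range_iff {V : Type*} [AddCommGroup V] [Module F V] [FiniteDimensional F V]
    {n k : ℕ} (hV : Module.finrank F V = k) (hkn : k ≤ n) (e : V →ₗ[F] Fin n → F) :
    IsMDS (LinearMap.range e) k ↔
      ∀ v S, #S = k → (∀ i ∈ S, e v i = 0) → v = 0 := by
  classical
  have vanishes_of_card_le {x : Fin n → F} (hx : k ≤ #{i | x i = 0}) :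
      ∃ S : Finset (Fin n), #S = k ∧ ∀ i ∈ S, x i = 0 := by
    obtain ⟨S, hS, hSk⟩ := exists_subset_card_eq hx
    exact ⟨S, hSk, fun i hi => (mem_filter.1 (hS hi)).2⟩
  constructor
  · rintro ⟨hrank, hwt⟩ v S hS hv
    have hinj : Function.Injective e := by
      rw [← LinearMap.ker_eq_bot, ← Submodule.finrank_eq_zero]
      have := LinearMap.finrank_range_add_finrank_ker e
      omega
    by_contra hv0
    have hlt := (le_wt_iff hkn _).1 (hwt _ (LinearMap.mem_range_self e v)
      ((map_ne_zero_iff e hinj).2 hv0))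
    have : S ⊆ ({i | e v i = 0} : Finset _) := fun i hi => mem_filter.2 ⟨mem_univ i, hv i hi⟩
    exact absurd (card_le_card this) (by omega)
  · intro H
    have hinj : Function.Injective e := by
      rw [← LinearMap.ker_eq_bot, eq_bot_iff]
      intro v hv
      obtain ⟨S, hS, -⟩ :=
        vanishes_of_card_le (x := e v) (by simp [LinearMap.mem_ker.1 hv, hkn])
      exact H v S hS fun i _ => by simp [LinearMap.mem_ker.1 hv]
    refine ⟨(LinearMap.finrank_range_of_inj hinj).trans hV, ?_⟩
    rintro _ ⟨v, rfl⟩ hv0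
    rw [le_wt_iff hkn]
    by_contra! hle
    obtain ⟨S, hS, hvS⟩ := vanishes_of_card_le hle
    exact hv0 (by rw [H v S hS hvS, map_zero])

end LinearCode

section TwistedPolynomials

variable {F : Type*} [Field F]

noncomputable def twPolyLinearMap (k t h : ℕ) (η : F) : (Fin k → F) →ₗ[F] F[X] where
  toFun := twPoly k t h η
  map_add' f g := by
    simp only [twPoly]
    split_ifs
    · simp only [Pi.add_apply, map_add, mul_add, add_mul, sum_add_distrib]
      ring
    · simp [sum_add_distrib, add_mul]
  map_smul' a f := by
    simp only [twPoly]
    split_ifs <;> simp [smul_eq_C_mul, mul_sum, mul_assoc, mul_left_comm]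

lemma coeff_twPoly {k t h : ℕ} (hh : h < k) (η : F) (f : Fin k → F) (j : ℕ) :
    (twPoly k t h η f).coeff j =
      (if hj : j < k then f ⟨j, hj⟩ else 0) +
        if j = k - 1 + t then η * f ⟨h, hh⟩ else 0 := by
  rw [twPoly, dif_pos hh, coeff_add, finsetSum_coeff, coeff_C_mul_X_pow]
  congr 1
  simp only [coeff_C_mul_X_pow]
  split_ifs with hj
  · rw [sum_eq_single ⟨j, hj⟩ (fun i _ hi => if_neg fun h => hi (Fin.ext h.symm)) (by simp)]
    simp
  · exact sum_eq_zero fun i _ => if_neg (by omega)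

lemma coeff_twPoly_of_lt {k t h j : ℕ} (ht : 0 < t) (hh : h < k) (η : F) (f : Fin k → F)
    (hj : j < k) : (twPoly k t h η f).coeff j = f ⟨j, hj⟩ := by
  rw [coeff_twPoly hh, dif_pos hj, if_neg (by omega), add_zero]

lemma twPoly_injective {k t h : ℕ} (ht : 0 < t) (hh : h < k) (η : F) :
    Function.Injective (twPoly k t h η) := fun f g hfg =>
  funext fun j => by
    rw [← coeff_twPoly_of_lt ht hh η f j.2, ← coeff_twPoly_of_lt ht hh η g j.2, hfg]

def IsTwisted (k : ℕ) (η : F) (g : F[X]) : Prop :=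
  g.natDegree ≤ k ∧ g.coeff k = η * g.coeff 0

lemma range_twPoly {k : ℕ} (hk0 : 0 < k) (η : F) :
    Set.range (twPoly k 1 0 η) = {g | IsTwisted k η g} := by
  have coeff_eq (f : Fin k → F) (j : ℕ) : (twPoly k 1 0 η f).coeff j =
      (if hj : j < k then f ⟨j, hj⟩ else 0) + if j = k then η * f ⟨0, hk0⟩ else 0 := by
    rw [coeff_twPoly hk0, Nat.sub_add_cancel hk0]
  ext g
  constructor
  · rintro ⟨f, rfl⟩
    refine ⟨natDegree_le_iff_coeff_eq_zero.2 fun j hj => ?_, ?_⟩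
    · rw [coeff_eq, dif_neg (by omega), if_neg (by omega), add_zero]
    · rw [coeff_eq, coeff_eq, dif_neg (lt_irrefl k), dif_pos hk0, if_pos rfl, if_neg hk0.ne,
        zero_add, add_zero]
  · rintro ⟨hdeg, htw⟩
    refine ⟨fun j => g.coeff j, ext fun j => ?_⟩
    rw [coeff_eq]
    rcases lt_trichotomy j k with hj | rfl | hj
    · rw [dif_pos hj, if_neg hj.ne, add_zero]
    · rw [dif_neg (lt_irrefl j), if_pos rfl, zero_add, htw]
    · rw [dif_neg (by omega), if_neg hj.ne', add_zero, coeff_eq_zero_of_natDegree_lt (by omega)]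

end TwistedPolynomials

section RowColumnCode

variable {F : Type*} [Field F] {m : ℕ}

noncomputable def rcEval (α : Fin m → F) (b c lam : F) : F[X] →ₗ[F] Fin (m + 1) → F where
  toFun g := Fin.snoc (fun i => g.eval (α i)) (g.eval b - lam * g.eval c)
  map_add' f g := by
    ext i
    refine Fin.lastCases ?_ (fun j => ?_) i <;> simp only [Fin.snoc_last, Fin.snoc_castSucc,
      eval_add, Pi.add_apply]
    ring
  map_smul' a g := by
    ext i
    refine Fin.lastCases ?_ (fun j => ?_) i <;> simp only [Fin.snoc_last, Fin.snoc_castSucc,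
      eval_smul, Pi.smul_apply, smul_eq_mul, RingHom.id_apply]
    ring

@[simp]
lemma rcEval_castSucc (α : Fin m → F) (b c lam : F) (g : F[X]) (j : Fin m) :
    rcEval α b c lam g j.castSucc = g.eval (α j) := by
  simp [rcEval]

@[simp]
lemma rcEval_last (α : Fin m → F) (b c lam : F) (g : F[X]) :
    rcEval α b c lam g (Fin.last m) = g.eval b - lam * g.eval c := by
  simp [rcEval]

lemma RCTRS_eq_range (k t h : ℕ) (η : F) (α : Fin m → F) (b c lam : F) :
    RCTRS k t h η α b c lam =
      LinearMap.range (rcEval α b c lam ∘ₗ twPolyLinearMap k t h η) := by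
  rw [RCTRS, ← Submodule.span_eq (LinearMap.range _), LinearMap.coe_range]
  congr 1
  ext w
  exact exists_congr fun f => eq_comm

lemma isMDS_RCTRS_iff {k : ℕ} (hk0 : 0 < k) (hkn : k ≤ m + 1) (η : F) (α : Fin m → F)
    (b c lam : F) :
    IsMDS (RCTRS k 1 0 η α b c lam) k ↔
      ∀ S : Finset (Fin (m + 1)), #S = k →
        ∀ g, IsTwisted k η g → (∀ i ∈ S, rcEval α b c lam g i = 0) → g = 0 := by
  rw [RCTRS_eq_range, isMDS_range_iff (by simp) hkn]
  constructor
  · intro H S hS g hg hvanish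
    obtain ⟨f, rfl⟩ : g ∈ Set.range (twPoly k 1 0 η) := range_twPoly hk0 η ▸ hg
    rw [H f S hS hvanish]
    exact map_zero (twPolyLinearMap k 1 0 η)
  · intro H f S hS hvanish
    refine twPoly_injective one_pos hk0 η ?_
    have hf : twPoly k 1 0 η f ∈ {g | IsTwisted k η g} := range_twPoly hk0 η ▸ ⟨f, rfl⟩
    rw [H S hS _ hf hvanish]
    exact (map_zero (twPolyLinearMap k 1 0 η)).symm

end RowColumnCode

section Nodal

variable {F ι : Type*} [Field F] {α : ι → F} {J : Finset ι}

lemma nodal_dvd_of_eval_eq_zero (hα : Function.Injective α) {p : F[X]}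
    (hp : ∀ j ∈ J, p.eval (α j) = 0) : nodal J α ∣ p :=
  nodal_eq J α ▸ prod_dvd_of_coprime ((pairwise_coprime_X_sub_C hα).set_pairwise _) fun j hj =>
    dvd_iff_isRoot.2 (hp j hj)

variable (α J)

lemma coeff_zero_nodal : (nodal J α).coeff 0 = (-1) ^ #J * ∏ j ∈ J, α j := by
  simp [coeff_zero_eq_eval_zero, eval_nodal, ← prod_const, ← prod_mul_distrib]

lemma coeff_nodal_mul_card_add {q : F[X]} {d : ℕ} (hq : q.natDegree ≤ d) :
    (nodal J α * q).coeff (#J + d) = q.coeff d := by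
  rw [coeff_mul_add_eq_of_natDegree_le (natDegree_nodal (s := J) (v := α)).le hq,
    ← natDegree_nodal (s := J) (v := α), nodal_monic.coeff_natDegree, one_mul]

lemma isTwisted_nodal_mul_iff {k : ℕ} (hJ : #J ≤ k) (η : F) {q : F[X]}
    (hq : q.natDegree ≤ k - #J) :
    IsTwisted k η (nodal J α * q) ↔
      q.coeff (k - #J) = (-1) ^ #J * η * (∏ j ∈ J, α j) * q.coeff 0 := by
  have hdeg : (nodal J α * q).natDegree ≤ k :=
    natDegree_mul_le.trans (by rw [natDegree_nodal]; omega)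
  rw [IsTwisted, and_iff_right hdeg, ← Nat.add_sub_cancel' hJ, coeff_nodal_mul_card_add α J hq,
    Nat.add_sub_cancel' hJ, mul_coeff_zero, coeff_zero_nodal]
  ring_nf

variable {α J}

lemma exists_eq_nodal_mul (hα : Function.Injective α) {k : ℕ} {η : F} {g : F[X]}
    (hg : IsTwisted k η g) (hvanish : ∀ j ∈ J, g.eval (α j) = 0) :
    ∃ q : F[X], q.natDegree ≤ k - #J ∧ g = nodal J α * q := by
  obtain ⟨q, rfl⟩ := nodal_dvd_of_eval_eq_zero hα hvanish
  refine ⟨q, ?_, rfl⟩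
  rcases eq_or_ne q 0 with rfl | hq
  · simp
  · have := hg.1
    rw [natDegree_mul nodal_ne_zero hq, natDegree_nodal] at this
    omega

lemma forall_isTwisted_eq_zero_iff_of_card_eq (hα : Function.Injective α) {k : ℕ}
    (hJ : #J = k) (η : F) :
    (∀ g, IsTwisted k η g → (∀ j ∈ J, g.eval (α j) = 0) → g = 0) ↔
      (-1) ^ k * η * ∏ j ∈ J, α j ≠ 1 := by
  constructor
  · intro H hc
    have htw : IsTwisted k η (nodal J α * 1) :=
      (isTwisted_nodal_mul_iff α J hJ.le η (by simp)).2 (by simp [hJ, hc])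
    exact nodal_ne_zero (by simpa using H _ htw fun j hj => by simp [eval_nodal_at_node hj])
  · intro hc g hg hvanish
    obtain ⟨q, hq, rfl⟩ := exists_eq_nodal_mul hα hg hvanish
    rw [isTwisted_nodal_mul_iff α J hJ.le η hq, hJ, Nat.sub_self] at hg
    rw [hJ, Nat.sub_self] at hq
    have hq0 : q.coeff 0 = 0 := by
      have : (1 - (-1) ^ k * η * ∏ j ∈ J, α j) * q.coeff 0 = 0 := by
        linear_combination hg
      exact (mul_eq_zero.1 this).resolve_left (sub_ne_zero.2 hc.symm)
    rw [eq_C_of_natDegree_le_zero hq, hq0, C_0, mul_zero]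

end Nodal

section PhiPolynomial

variable {F : Type*} [Field F] {m : ℕ} {α : Fin m → F}

noncomputable def phiPoly (α : Fin m → F) (η : F) (J : Finset (Fin m)) : F[X] :=
  nodal J α * (C ((-1) ^ #J * η * ∏ j ∈ J, α j) * X + 1)

lemma eval_phiPoly (α : Fin m → F) (η : F) (J : Finset (Fin m)) (x : F) :
    (phiPoly α η J).eval x = PhiRC α η J x := by
  simp only [phiPoly, eval_mul, eval_nodal, eval_add, eval_C, eval_X, eval_one, PhiRC]
  ring

lemma phiPoly_ne_zero (α : Fin m → F) (η : F) (J : Finset (Fin m)) : phiPoly α η J ≠ 0 :=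
  mul_ne_zero nodal_ne_zero fun h => by simpa using congrArg (coeff · 0) h

lemma isTwisted_phiPoly (α : Fin m → F) (η : F) {J : Finset (Fin m)} {k : ℕ}
    (hJ : #J + 1 = k) :
    IsTwisted k η (phiPoly α η J) := by
  have hk : k - #J = 1 := by omega
  have hdeg : (C ((-1) ^ #J * η * ∏ j ∈ J, α j) * X + 1 : F[X]).natDegree ≤ k - #J := by
    rw [hk]
    compute_degree!
  rw [phiPoly, isTwisted_nodal_mul_iff α J (by omega) η hdeg, hk]
  simp only [coeff_add, coeff_C_mul_X, coeff_one]
  norm_num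

lemma forall_isTwisted_eq_zero_iff_of_card_add_one_eq (hα : Function.Injective α)
    {J : Finset (Fin m)} {k : ℕ} (hJ : #J + 1 = k) (η b c lam : F) :
    (∀ g, IsTwisted k η g → g.eval b - lam * g.eval c = 0 →
        (∀ j ∈ J, g.eval (α j) = 0) → g = 0) ↔
      PhiRC α η J b ≠ lam * PhiRC α η J c := by
  have hk : k - #J = 1 := by omega
  constructor
  · intro H hbad
    refine phiPoly_ne_zero α η J (H _ (isTwisted_phiPoly α η hJ) ?_ fun j hj => ?_)
    · rw [eval_phiPoly, eval_phiPoly, hbad, sub_self]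
    · rw [phiPoly, eval_mul, eval_nodal_at_node hj, zero_mul]
  · intro hne g hg hlast hvanish
    obtain ⟨q, hq, rfl⟩ := exists_eq_nodal_mul hα hg hvanish
    rw [isTwisted_nodal_mul_iff α J (by omega) η hq, hk] at hg
    rw [hk] at hq
    have hgq : nodal J α * q = C (q.coeff 0) * phiPoly α η J := by
      conv_lhs => rw [eq_X_add_C_of_natDegree_le_one hq]
      rw [phiPoly, hg, map_mul]
      ring
    rw [hgq] at hlast ⊢
    simp only [eval_mul, eval_C, eval_phiPoly] at hlast
    have hu : q.coeff 0 = 0 :=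
      (mul_eq_zero.1 (by linear_combination hlast)).resolve_right (sub_ne_zero.2 hne)
    rw [hu, C_0, zero_mul]

end PhiPolynomial

lemma Fin.forall_finset_card_eq_iff {m k : ℕ} (hk : 0 < k) (P : Finset (Fin (m + 1)) → Prop) :
    (∀ S, #S = k → P S) ↔
      (∀ I : Finset (Fin m), #I = k → P (I.map Fin.castSuccEmb)) ∧
        ∀ J : Finset (Fin m), #J = k - 1 →
          P (Finset.cons (Fin.last m) (J.map Fin.castSuccEmb) (by simp)) := by
  refine ⟨fun H => ⟨fun I hI => H _ (by simpa), fun J hJ => H _ (by rw [card_cons, card_map]; omega)⟩,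
    fun ⟨hI, hJ⟩ S hS => ?_⟩
  set J := S.preimage Fin.castSucc (Fin.castSucc_injective m).injOn
  by_cases hlast : Fin.last m ∈ S
  · have hSJ : S = Finset.cons (Fin.last m) (J.map Fin.castSuccEmb) (by simp) := by
      ext i
      induction i using Fin.lastCases <;> simp [J, hlast]
    rw [hSJ] at hS ⊢
    exact hJ J (by rw [card_cons, card_map] at hS; omega)
  · have hSJ : S = J.map Fin.castSuccEmb := by
      ext i
      induction i using Fin.lastCases <;> simp [J, hlast]
    rw [hSJ] at hS ⊢
    exact hI J (by simpa using hS)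

theorem stmt1_general {F : Type*} [Field F] {m k : ℕ}
    (hk0 : 0 < k) (hkn : k ≤ m + 1)
    (α : Fin m → F) (hα : Function.Injective α) (b c lam η : F) :
    IsMDS (RCTRS k 1 0 η α b c lam) k ↔
      ((∀ I : Finset (Fin m), I.card = k →
          (-1 : F) ^ k * η * ∏ i ∈ I, α i ≠ 1) ∧
       (∀ J : Finset (Fin m), J.card = k - 1 →
          PhiRC α η J b ≠ lam * PhiRC α η J c)) := by
  rw [isMDS_RCTRS_iff hk0 hkn, Fin.forall_finset_card_eq_iff hk0]
  simp only [forall_mem_map, forall_mem_cons, Fin.castSuccEmb_apply, rcEval_castSucc,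
    rcEval_last, and_imp]
  exact and_congr (forall₂_congr fun I hI => forall_isTwisted_eq_zero_iff_of_card_eq hα hI η)
    (forall₂_congr fun J hJ =>
      forall_isTwisted_eq_zero_iff_of_card_add_one_eq hα (by omega) η b c lam)

theorem stmt1 {F : Type*} [Field F] [Fintype F] {m k : ℕ}
    (hk0 : 0 < k) (hkn : k ≤ m + 1) (hq : m ≤ Fintype.card F)
    (α : Fin m → F) (hα : Function.Injective α) (b c lam η : F) :
    IsMDS (RCTRS k 1 0 η α b c lam) k ↔
      ((∀ I : Finset (Fin m), I.card = k →
          (-1 : F) ^ k * η * ∏ i ∈ I, α i ≠ 1) ∧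
       (∀ J : Finset (Fin m), J.card = k - 1 →
          PhiRC α η J b ≠ lam * PhiRC α η J c)) :=
  stmt1_general hk0 hkn α hα b c lam η
end

section
/- Let F_q be a finite field, k ≥ 1, let α_{i_1},…,α_{i_{k−1}} ∈ F_q be distinct and b,c,λ,η ∈ F_q. Let B be the k×k matrix whose first row is (1+η α_{i_1}^k, …, 1+η α_{i_{k−1}}^k, 1−λ+η(b^k−λc^k)) and whose r-th row, for 2 ≤ r ≤ k, is (α_{i_1}^{r−1}, …, α_{i_{k−1}}^{r−1}, b^{r−1}−λc^{r−1}). Then det B = ∏_{1≤j<ℓ≤k−1}(α_{i_ℓ}−α_{i_j}) · (Φ_J(b) − λ Φ_J(c)), where J = {i_1,…,i_{k−1}}. -/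
/-!
The last column of `B` is `w(b) - λ w(c)`, where `w(x) = (1 + η x^k, x, x², …, x^{k-1})`, so by
linearity `det B = D(b) - λ D(c)`, with `D(x)` the determinant of the matrix whose columns are `w`
at the nodes `α_{i_1}, …, α_{i_{k-1}}, x`. Splitting the first row `1 + η x_j^k`, the `1` part is
the Vandermonde determinant, and the `η x_j^k` part is the Vandermonde matrix with columns scaled
by `x_j` and rows rotated by a `k`-cycle, of sign `(-1)^{k-1}`. Hence
`D(x) = V(α) ∏ (x - α_j) (1 + (-1)^{k-1} η x ∏ α_j)`.
-/

open Polynomial Finset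

noncomputable section

variable {F : Type*} [Field F]

/-- The matrix `B` of STATEMENT 3 (with `k = r+1`): first row
`(1+η α_j^k, …, 1−λ+η(b^k−λc^k))`, and `i`-th row `(α_j^i, …, b^i−λc^i)` for `1 ≤ i ≤ k−1`. -/
def Bmat0 {r : ℕ} (β : Fin r → F) (b c lam η : F) :
    Matrix (Fin (r + 1)) (Fin (r + 1)) F :=
  Matrix.of fun i j =>
    if hj : (j : ℕ) < r then
      if (i : ℕ) = 0 then 1 + η * β ⟨j, hj⟩ ^ (r + 1) else β ⟨j, hj⟩ ^ (i : ℕ)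
    else
      if (i : ℕ) = 0 then 1 - lam + η * (b ^ (r + 1) - lam * c ^ (r + 1))
      else b ^ (i : ℕ) - lam * c ^ (i : ℕ)

section TwistedVandermonde

open Matrix

variable {R : Type*} [CommRing R]

theorem Fin.prod_Ioi_castSucc {M : Type*} [CommMonoid M] {n : ℕ} (f : Fin (n + 1) → M)
    (i : Fin n) :
    ∏ j ∈ Ioi i.castSucc, f j = (∏ j ∈ Ioi i, f j.castSucc) * f (Fin.last n) := by
  rw [← filter_lt_eq_Ioi, prod_filter, ← filter_lt_eq_Ioi, prod_filter, Fin.prod_univ_castSucc]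
  simp [Fin.castSucc_lt_last]

theorem Matrix.det_vandermonde_snoc {n : ℕ} (v : Fin n → R) (x : R) :
    (vandermonde (Fin.snoc v x : Fin (n + 1) → R)).det =
      (vandermonde v).det * ∏ i, (x - v i) := by
  simp [det_vandermonde, Fin.prod_univ_castSucc, Fin.prod_Ioi_castSucc, prod_mul_distrib,
    (show IsMax (Fin.last n) from fun _ _ => Fin.le_last _).finsetIoi_eq]

def twistedPowers (η : R) (n : ℕ) (x : R) : Fin (n + 1) → R :=
  Fin.cons (1 + η * x ^ (n + 1)) fun i : Fin n => x ^ ((i : ℕ) + 1)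

def twistedVandermonde {n : ℕ} (η : R) (v : Fin (n + 1) → R) :
    Matrix (Fin (n + 1)) (Fin (n + 1)) R :=
  Matrix.of fun i j => twistedPowers η n (v j) i

theorem twistedVandermonde_update {n : ℕ} (η : R) (v : Fin (n + 1) → R) (j : Fin (n + 1))
    (x : R) :
    twistedVandermonde η (Function.update v j x) =
      (twistedVandermonde η v).updateCol j (twistedPowers η n x) := by
  ext i k
  rcases eq_or_ne k j with rfl | hk
  · simp [twistedVandermonde]
  · simp [twistedVandermonde, hk]

theorem det_twistedVandermonde {n : ℕ} (η : R) (v : Fin (n + 1) → R) :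
    (twistedVandermonde η v).det =
      (vandermonde v).det * (1 + (-1) ^ n * η * ∏ j, v j) := by
  set W : Matrix (Fin (n + 1)) (Fin (n + 1)) R :=
    of (Fin.cons (fun j => v j ^ (n + 1)) fun i : Fin n => fun j => v j ^ ((i : ℕ) + 1))
  have hsplit : twistedVandermonde η v =
      (vandermonde v)ᵀ.updateRow 0 ((fun _ => 1) + η • fun j => v j ^ (n + 1)) := by
    ext i j
    refine Fin.cases ?_ (fun i => ?_) i <;> simp [twistedVandermonde, twistedPowers]
  have hone : (vandermonde v)ᵀ.updateRow 0 (fun _ => 1) = (vandermonde v)ᵀ := by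
    ext i j
    rcases eq_or_ne i 0 with rfl | hi <;> simp [*]
  have hW : (vandermonde v)ᵀ.updateRow 0 (fun j => v j ^ (n + 1)) = W := by
    ext i j
    refine Fin.cases ?_ (fun i => ?_) i <;> simp [W]
  -- multiplying by `diagonal v` shifts every row up one power; `W` is this, rotated
  have hrot : (vandermonde v)ᵀ * diagonal v = W.submatrix (finRotate (n + 1)) id := by
    ext i j
    have hcons := congrFun (Fin.snoc_eq_cons_rotate
      (fun i : Fin n => fun j => v j ^ ((i : ℕ) + 1)) fun j => v j ^ (n + 1)) i
    simp only [submatrix_apply, W, of_apply, id, ← hcons]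
    refine Fin.lastCases ?_ (fun i => ?_) i <;> simp [mul_diagonal, pow_succ]
  have hdetW : W.det = (-1) ^ n * ((vandermonde v).det * ∏ j, v j) := by
    have h := det_permute (finRotate (n + 1)) W
    rw [← hrot, det_mul, det_diagonal, det_transpose, sign_finRotate] at h
    rw [h, Units.val_pow_eq_pow_val, ← mul_assoc]
    simp [← mul_pow]
  rw [hsplit, det_updateRow_add, det_updateRow_smul, hone, hW, hdetW, det_transpose]
  ring

end TwistedVandermonde

theorem Bmat0_eq_updateCol {r : ℕ} (β : Fin r → F) (b c lam η : F) :
    Bmat0 β b c lam η = (twistedVandermonde η (Fin.snoc β b)).updateCol (Fin.last r)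
      (twistedPowers η r b + (-lam) • twistedPowers η r c) := by
  ext i j
  refine Fin.lastCases ?_ (fun j => ?_) j <;> refine Fin.cases ?_ (fun i => ?_) i <;>
    simp [Bmat0, twistedVandermonde, twistedPowers] <;> ring

theorem stmt3_general {r : ℕ} (β : Fin r → F) (b c lam η : F) :
    (Bmat0 β b c lam η).det =
      (∏ j : Fin r, ∏ l ∈ Finset.Ioi j, (β l - β j)) *
        ((∏ j : Fin r, (b - β j)) * (1 + (-1 : F) ^ r * η * b * ∏ j : Fin r, β j) -
          lam * ((∏ j : Fin r, (c - β j)) *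
            (1 + (-1 : F) ^ r * η * c * ∏ j : Fin r, β j))) := by
  rw [Bmat0_eq_updateCol, Matrix.det_updateCol_add, Matrix.det_updateCol_smul,
    ← twistedVandermonde_update, ← twistedVandermonde_update, Fin.update_snoc_last,
    Fin.update_snoc_last, det_twistedVandermonde, det_twistedVandermonde,
    Matrix.det_vandermonde_snoc, Matrix.det_vandermonde_snoc, Matrix.det_vandermonde,
    Fin.prod_snoc, Fin.prod_snoc]
  ring

theorem stmt3 {r : ℕ} (β : Fin r → F) (hβ : Function.Injective β) (b c lam η : F) :
    (Bmat0 β b c lam η).det =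
      (∏ j : Fin r, ∏ l ∈ Finset.Ioi j, (β l - β j)) *
        ((∏ j : Fin r, (b - β j)) * (1 + (-1 : F) ^ r * η * b * ∏ j : Fin r, β j) -
          lam * ((∏ j : Fin r, (c - β j)) *
            (1 + (-1 : F) ^ r * η * c * ∏ j : Fin r, β j))) :=
  stmt3_general β b c lam η

end
end

section
/- Let F_q be a finite field, k ≥ 1, let α_{i_1},…,α_{i_{k−1}} ∈ F_q be distinct and η ∈ F_q. Let D be the k×k matrix whose j-th column, for 1 ≤ j ≤ k−1, is (1+η α_{i_j}^k, α_{i_j}, α_{i_j}^2, …, α_{i_j}^{k−1})^T and whose last column is (0,0,…,0,1)^T. Then det D = ∏_{1≤j<ℓ≤k−1}(α_{i_ℓ}−α_{i_j}) · (1 + (−1)^{k−2} η (∏_{j=1}^{k−1} α_{i_j})(Σ_{j=1}^{k−1} α_{i_j})). In particular, D is invertible if and only if (−1)^{k−1} η (∏_{j=1}^{k−1} α_{i_j})(Σ_{j=1}^{k−1} α_{i_j}) ≠ 1. -/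
/-!
Modulo `P = ∏ⱼ (X - βⱼ)` the power `X^(r+1)` reduces to `X^(r+1) - (X + ∑ βⱼ) P`, which has degree
`< r` (its two top coefficients cancel) and constant term `(-1)^(r+1) (∑ βⱼ)(∏ βⱼ)`. After expanding
`D` along its last column, the first row `1 + η βⱼ^(r+1)` is therefore a linear combination of the
Vandermonde rows `βⱼ^i` (`i < r`) with coefficient `1 + (-1)^(r+1) η (∑ βⱼ)(∏ βⱼ)` on the row
`βⱼ^0`, so `det D` is this coefficient times the Vandermonde determinant.
-/

open Polynomial Finset

noncomputable section

variable {F : Type*} [Field F]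

/-- The matrix `D` of STATEMENT 4 (with `k = r+1`): the `j`-th column, for `j ≤ k−1`, is
`(1+η α_j^k, α_j, α_j^2, …, α_j^{k−1})ᵀ` and the last column is `(0,…,0,1)ᵀ`. -/
def Dmat0 {r : ℕ} (β : Fin r → F) (η : F) : Matrix (Fin (r + 1)) (Fin (r + 1)) F :=
  Matrix.of fun i j =>
    if hj : (j : ℕ) < r then
      if (i : ℕ) = 0 then 1 + η * β ⟨j, hj⟩ ^ (r + 1) else β ⟨j, hj⟩ ^ (i : ℕ)
    else
      if (i : ℕ) = r then 1 else 0

open Matrix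

section
variable {R : Type*} [CommRing R]

theorem Polynomial.degree_X_pow_sub_lt_of_nextCoeff_eq_zero {Q : R[X]} {n : ℕ} (hQ : Q.Monic)
    (hdeg : Q.natDegree = n + 1) (hnext : Q.nextCoeff = 0) :
    (X ^ (n + 1) - Q).degree < (n : WithBot ℕ) := by
  rw [degree_lt_iff_coeff_zero]
  intro m hm
  rw [coeff_sub, coeff_X_pow]
  rcases hm.eq_or_lt with rfl | hm
  · rw [nextCoeff_of_natDegree_pos (by omega), hdeg] at hnext
    simpa using hnext
  rcases (Nat.succ_le_of_lt hm).eq_or_lt with rfl | hm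
  · simp [← hdeg, hQ.coeff_natDegree]
  · rw [coeff_eq_zero_of_natDegree_lt (by omega), if_neg (by omega), sub_zero]

theorem Polynomial.degree_X_pow_sub_mul_prod_X_sub_C_lt {ι : Type*} [Fintype ι] (v : ι → R) :
    (X ^ (Fintype.card ι + 1) - (X + C (∑ i, v i)) * ∏ i, (X - C (v i))).degree <
      (Fintype.card ι : WithBot ℕ) := by
  nontriviality R
  have hP := monic_prod_X_sub_C v Finset.univ
  have hX := monic_X_add_C (∑ i, v i)
  refine degree_X_pow_sub_lt_of_nextCoeff_eq_zero (hX.mul hP) ?_ ?_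
  · rw [hX.natDegree_mul hP, natDegree_X_add_C, natDegree_finsetProd_X_sub_C_eq_card,
      Finset.card_univ, add_comm]
  · rw [hX.nextCoeff_mul hP, nextCoeff_X_add_C, prod_X_sub_C_nextCoeff, add_neg_cancel]

theorem Matrix.det_updateRow_transpose_vandermonde_eval {n : ℕ} (v : Fin n → R) (i : Fin n)
    {p : R[X]} (hp : p.degree < n) :
    ((vandermonde v)ᵀ.updateRow i fun j => p.eval (v j)).det =
      p.coeff i * (vandermonde v).det := by
  have hnat : p.natDegree < n := by
    by_cases h0 : p = 0
    · simpa [h0] using i.pos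
    · exact (natDegree_lt_iff_degree_lt h0).2 hp
  have hrow : (fun j => p.eval (v j)) = ∑ k : Fin n, p.coeff k • (vandermonde v)ᵀ k := by
    ext j
    rw [eval_eq_sum_range' hnat, ← Fin.sum_univ_eq_sum_range]
    simp [mul_comm]
  rw [hrow, det_updateRow_sum, det_transpose, smul_eq_mul]

theorem Matrix.det_eq_det_submatrix_castSucc {n : ℕ} (A : Matrix (Fin (n + 1)) (Fin (n + 1)) R)
    (hA : ∀ i, A i (Fin.last n) = if i = Fin.last n then 1 else 0) :
    A.det = (A.submatrix Fin.castSucc Fin.castSucc).det := by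
  rw [det_succ_column A (Fin.last n), Finset.sum_eq_single (Fin.last n)]
  · simp [hA, Fin.succAbove_last, ← two_mul, pow_mul]
  · intro i _ hi
    simp [hA, hi]
  · simp

theorem Matrix.det_updateRow_zero_transpose_vandermonde {s : ℕ} (v : Fin (s + 1) → R) (η : R) :
    ((vandermonde v)ᵀ.updateRow 0 fun j => 1 + η * v j ^ (s + 2)).det =
      (1 + (-1) ^ s * η * (∏ j, v j) * ∑ j, v j) * (vandermonde v).det := by
  have hq := degree_X_pow_sub_mul_prod_X_sub_C_lt v
  rw [Fintype.card_fin] at hq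
  set q : R[X] := X ^ (s + 1 + 1) - (X + C (∑ j, v j)) * ∏ j, (X - C (v j))
  have hdeg : (1 + η • q).degree < (s + 1 : ℕ) :=
    (degree_add_le _ _).trans_lt <| max_lt (degree_one_le.trans_lt (by exact_mod_cast s.succ_pos))
      ((degree_smul_le _ _).trans_lt hq)
  have heval : ∀ j, (1 + η • q).eval (v j) = 1 + η * v j ^ (s + 2) := by
    intro j
    simp [q, eval_prod, Finset.prod_eq_zero (Finset.mem_univ j)]
  have hcoeff : (1 + η • q).coeff 0 = 1 + (-1) ^ s * η * (∏ j, v j) * ∑ j, v j := by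
    calc (1 + η • q).coeff 0 = (1 + η • q).eval 0 := coeff_zero_eq_eval_zero _
      _ = 1 + η * (-(∑ j, v j) * ∏ j, -v j) := by simp [q, eval_prod, eval_finsetSum]
      _ = _ := by rw [Finset.prod_neg, card_univ, Fintype.card_fin]; ring
  simpa only [heval, Fin.val_zero, hcoeff] using
    det_updateRow_transpose_vandermonde_eval v 0 hdeg

end

theorem Dmat0_submatrix_castSucc {s : ℕ} (β : Fin (s + 1) → F) (η : F) :
    (Dmat0 β η).submatrix Fin.castSucc Fin.castSucc =
      (vandermonde β)ᵀ.updateRow 0 fun j => 1 + η * β j ^ (s + 2) := by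
  ext i j
  by_cases hi : i = 0 <;> simp [Dmat0, updateRow_apply, hi, Fin.val_eq_zero_iff, j.is_le]

theorem Dmat0_apply_last {r : ℕ} (β : Fin r → F) (η : F) (i : Fin (r + 1)) :
    Dmat0 β η i (Fin.last r) = if i = Fin.last r then 1 else 0 := by
  simp only [Dmat0, of_apply, Fin.val_last, lt_irrefl, dite_false, Fin.ext_iff]

theorem det_Dmat0 {s : ℕ} (β : Fin (s + 1) → F) (η : F) :
    (Dmat0 β η).det =
      (1 + (-1) ^ s * η * (∏ j, β j) * ∑ j, β j) * (vandermonde β).det := by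
  rw [det_eq_det_submatrix_castSucc _ (Dmat0_apply_last β η), Dmat0_submatrix_castSucc,
    det_updateRow_zero_transpose_vandermonde]

theorem stmt4 {r : ℕ} (β : Fin r → F) (hβ : Function.Injective β) (η : F) :
    (Dmat0 β η).det =
      (∏ j : Fin r, ∏ l ∈ Finset.Ioi j, (β l - β j)) *
        (1 + (-1 : F) ^ (r + 1 - 2) * η * (∏ j : Fin r, β j) * (∑ j : Fin r, β j)) ∧
    (IsUnit (Dmat0 β η) ↔
      (-1 : F) ^ r * η * (∏ j : Fin r, β j) * (∑ j : Fin r, β j) ≠ 1) := by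
  rw [isUnit_iff_isUnit_det, isUnit_iff_ne_zero]
  cases r with
  | zero => simp [det_unique, Dmat0]
  | succ s =>
    rw [det_Dmat0, mul_ne_zero_iff, and_iff_left (det_vandermonde_ne_zero_iff.2 hβ),
      det_vandermonde, mul_comm]
    refine ⟨rfl, not_congr ⟨fun h => ?_, fun h => ?_⟩⟩ <;> linear_combination -h

end
end

section
/- Let q be a prime power, 0 < k ≤ n ≤ q+1, let α_1,…,α_{n−1} be distinct elements of F_q and b,c,λ,η ∈ F_q. The code RCTRS_{k−1,1}(α,b,c,λ,η) is MDS if and only if both of the following hold: (i) for every subset I ⊆ {1,…,n−1} of size k, η Σ_{i∈I} α_i ≠ −1; and (ii) for every subset J ⊆ {1,…,n−1} of size k−1, Ψ_J(b) ≠ λ Ψ_J(c). -/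
open Polynomial Finset

noncomputable section AuxRCTRS

open Polynomial Finset
open scoped Classical

variable {F : Type*} [Field F]

lemma tw_add (k t h : ℕ) (η : F) (f g : Fin k → F) :
    twPoly k t h η (f + g) = twPoly k t h η f + twPoly k t h η g := by
  have hd : (if hh : h < k then f ⟨h, hh⟩ + g ⟨h, hh⟩ else 0)
      = (if hh : h < k then f ⟨h, hh⟩ else 0) + (if hh : h < k then g ⟨h, hh⟩ else 0) := by
    split <;> simp
  simp only [twPoly, Pi.add_apply, hd, mul_add, C_add, add_mul, Finset.sum_add_distrib]
  ring

lemma tw_smul (k t h : ℕ) (η : F) (r : F) (f : Fin k → F) :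
    twPoly k t h η (r • f) = C r * twPoly k t h η f := by
  have hd : (if hh : h < k then r * f ⟨h, hh⟩ else 0)
      = r * (if hh : h < k then f ⟨h, hh⟩ else 0) := by
    split <;> simp
  simp only [twPoly, Pi.smul_apply, smul_eq_mul, hd, C_mul, mul_add, Finset.mul_sum,
    mul_assoc]
  ring

/-- The encoding map of the RCTRS code. -/
def Emap (k : ℕ) (η : F) {m : ℕ} (α : Fin m → F) (b c lam : F) :
    (Fin k → F) →ₗ[F] (Fin (m + 1) → F) where
  toFun f := Fin.snoc (fun i => (twPoly k 1 (k - 1) η f).eval (α i))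
      ((twPoly k 1 (k - 1) η f).eval b - lam * (twPoly k 1 (k - 1) η f).eval c)
  map_add' f g := by
    funext j
    refine Fin.lastCases ?_ (fun i => ?_) j <;>
      simp [Fin.snoc_last, Fin.snoc_castSucc, tw_add, eval_add] <;> ring
  map_smul' r f := by
    funext j
    refine Fin.lastCases ?_ (fun i => ?_) j <;>
      simp [Fin.snoc_last, Fin.snoc_castSucc, tw_smul, smul_eq_mul] <;> ring

lemma Emap_castSucc {k : ℕ} (η : F) {m : ℕ} (α : Fin m → F) (b c lam : F)
    (f : Fin k → F) (i : Fin m) :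
    Emap k η α b c lam f (Fin.castSucc i) = (twPoly k 1 (k - 1) η f).eval (α i) := by
  simp [Emap, Fin.snoc_castSucc]

lemma Emap_last {k : ℕ} (η : F) {m : ℕ} (α : Fin m → F) (b c lam : F) (f : Fin k → F) :
    Emap k η α b c lam f (Fin.last m) =
      (twPoly k 1 (k - 1) η f).eval b - lam * (twPoly k 1 (k - 1) η f).eval c := by
  simp [Emap, Fin.snoc_last]

lemma rctrs_eq_range (k : ℕ) (η : F) {m : ℕ} (α : Fin m → F) (b c lam : F) :
    RCTRS k 1 (k - 1) η α b c lam = LinearMap.range (Emap k η α b c lam) := by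
  have h : rctrsWords k 1 (k - 1) η α b c lam
      = ↑(LinearMap.range (Emap k η α b c lam)) := by
    ext w
    simp only [rctrsWords, Set.mem_setOf_eq, SetLike.mem_coe, LinearMap.mem_range]
    constructor
    · rintro ⟨f, rfl⟩; exact ⟨f, rfl⟩
    · rintro ⟨f, rfl⟩; exact ⟨f, rfl⟩
  rw [RCTRS, h, Submodule.span_eq]

lemma sum_C_mul_X_coeff {k : ℕ} (f : Fin k → F) (n : ℕ) :
    (∑ i : Fin k, C (f i) * X ^ (i : ℕ)).coeff n = if h : n < k then f ⟨n, h⟩ else 0 := by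
  rw [finset_sum_coeff]
  simp only [coeff_C_mul, coeff_X_pow]
  split
  · next h =>
    rw [Finset.sum_eq_single (⟨n, h⟩ : Fin k)]
    · simp
    · intro b _ hb
      have : n ≠ (b : ℕ) := fun e => hb (Fin.ext e.symm)
      simp [this]
    · simp
  · next h =>
    refine Finset.sum_eq_zero fun i _ => ?_
    have : n ≠ (i : ℕ) := by have := i.isLt; omega
    simp [this]

lemma tw_coeff {k : ℕ} (hk : 0 < k) (η : F) (f : Fin k → F) (n : ℕ) :
    (twPoly k 1 (k - 1) η f).coeff n =
      (if h : n < k then f ⟨n, h⟩ else 0) +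
        (if n = k then η * f ⟨k - 1, Nat.sub_lt hk Nat.one_pos⟩ else 0) := by
  have hkk : k - 1 + 1 = k := Nat.succ_pred_eq_of_pos hk
  rw [twPoly, coeff_add, sum_C_mul_X_coeff, hkk, coeff_C_mul, coeff_X_pow,
    dif_pos (Nat.sub_lt hk Nat.one_pos)]
  congr 1
  split <;> simp

lemma tw_coeff_lt {k : ℕ} (hk : 0 < k) (η : F) (f : Fin k → F) {n : ℕ} (hn : n < k) :
    (twPoly k 1 (k - 1) η f).coeff n = f ⟨n, hn⟩ := by
  rw [tw_coeff hk, dif_pos hn, if_neg (by omega), add_zero]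

lemma tw_coeff_k {k : ℕ} (hk : 0 < k) (η : F) (f : Fin k → F) :
    (twPoly k 1 (k - 1) η f).coeff k = η * f ⟨k - 1, Nat.sub_lt hk Nat.one_pos⟩ := by
  rw [tw_coeff hk, dif_neg (lt_irrefl k), if_pos rfl, zero_add]

lemma tw_natDegree_le {k : ℕ} (hk : 0 < k) (η : F) (f : Fin k → F) :
    (twPoly k 1 (k - 1) η f).natDegree ≤ k := by
  refine natDegree_le_iff_coeff_eq_zero.2 fun N hN => ?_
  rw [tw_coeff hk, dif_neg (by omega), if_neg (by omega), add_zero]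

lemma tw_rel {k : ℕ} (hk : 0 < k) (η : F) (f : Fin k → F) :
    (twPoly k 1 (k - 1) η f).coeff k = η * (twPoly k 1 (k - 1) η f).coeff (k - 1) := by
  rw [tw_coeff_k hk, tw_coeff_lt hk η f (Nat.sub_lt hk Nat.one_pos)]

lemma tw_ne_zero {k : ℕ} (hk : 0 < k) (η : F) {f : Fin k → F} (hf : f ≠ 0) :
    twPoly k 1 (k - 1) η f ≠ 0 := by
  obtain ⟨i, hi⟩ := Function.ne_iff.1 hf
  intro h0
  apply hi
  have := tw_coeff_lt hk η f i.isLt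
  rw [h0, coeff_zero] at this
  simpa using this.symm

lemma tw_eq_of {k : ℕ} (hk : 0 < k) (η : F) (g : F[X]) (hd : g.natDegree ≤ k)
    (hr : g.coeff k = η * g.coeff (k - 1)) :
    twPoly k 1 (k - 1) η (fun i : Fin k => g.coeff i) = g := by
  refine Polynomial.ext fun n => ?_
  rw [tw_coeff hk]
  rcases lt_trichotomy n k with h | h | h
  · rw [dif_pos h, if_neg (by omega), add_zero]
  · subst h
    rw [dif_neg (lt_irrefl n), if_pos rfl, zero_add, hr]
  · rw [dif_neg (by omega), if_neg (by omega), add_zero,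
      (coeff_eq_zero_of_natDegree_lt (lt_of_le_of_lt hd h)).symm]

lemma prod_dvd {m : ℕ} {α : Fin m → F} (hα : Function.Injective α) {g : F[X]} (hg : g ≠ 0)
    (S : Finset (Fin m)) (hroot : ∀ j ∈ S, g.eval (α j) = 0) :
    (∏ j ∈ S, (X - C (α j))) ∣ g := by
  have h1 : (S.val.map α) ≤ g.roots := by
    refine (Multiset.le_iff_subset (S.nodup.map hα)).2 ?_
    intro x hx
    obtain ⟨j, hj, rfl⟩ := Multiset.mem_map.1 hx
    exact (mem_roots hg).2 (hroot j hj)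
  have h2 := (Multiset.prod_X_sub_C_dvd_iff_le_roots hg (S.val.map α)).2 h1
  rwa [Multiset.map_map] at h2

lemma prod_monic {m : ℕ} (α : Fin m → F) (S : Finset (Fin m)) :
    (∏ j ∈ S, (X - C (α j))).Monic :=
  monic_prod_of_monic _ _ fun j _ => monic_X_sub_C _

lemma prod_natDegree {m : ℕ} (α : Fin m → F) (S : Finset (Fin m)) :
    (∏ j ∈ S, (X - C (α j))).natDegree = S.card := by
  rw [natDegree_prod_of_monic _ _ fun j _ => monic_X_sub_C _]
  simp [natDegree_X_sub_C]

lemma coeff_helper {m k : ℕ} (hk : 0 < k) (α : Fin m → F) {J : Finset (Fin m)}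
    (hJ : J.card = k - 1) (a d : F) :
    ((∏ j ∈ J, (X - C (α j))) * (C d * X + C a)).natDegree ≤ k ∧
    ((∏ j ∈ J, (X - C (α j))) * (C d * X + C a)).coeff k = d ∧
    ((∏ j ∈ J, (X - C (α j))) * (C d * X + C a)).coeff (k - 1)
      = a - d * ∑ j ∈ J, α j := by
  set p := ∏ j ∈ J, (X - C (α j)) with hp
  have hm : p.Monic := prod_monic α J
  have hpd : p.natDegree = k - 1 := by rw [hp, prod_natDegree, hJ]
  have hqd : (C d * X + C a).natDegree ≤ 1 := by
    refine le_trans (natDegree_add_le _ _) ?_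
    simp [natDegree_C]
    exact le_trans (natDegree_C_mul_le _ _) (by simp)
  refine ⟨?_, ?_, ?_⟩
  · refine le_trans (natDegree_mul_le) ?_
    rw [hpd]; omega
  · have hexp : p * (C d * X + C a) = C d * (p * X) + C a * p := by ring
    rw [hexp, coeff_add, coeff_C_mul, coeff_C_mul]
    have h1 : (p * X).coeff k = 1 := by
      have : k = (k - 1) + 1 := by omega
      rw [this, coeff_mul_X, ← hpd, hm.coeff_natDegree]
    have h2 : p.coeff k = 0 := coeff_eq_zero_of_natDegree_lt (by omega)
    rw [h1, h2]; ring
  · by_cases h1 : k = 1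
    · subst h1
      have hJ0 : J = ∅ := Finset.card_eq_zero.1 (by omega)
      subst hJ0
      simp [hp, coeff_add, coeff_C_mul, coeff_mul_X_zero]
    · have hexp : p * (C d * X + C a) = C d * (p * X) + C a * p := by ring
      rw [hexp, coeff_add, coeff_C_mul, coeff_C_mul]
      have hk2 : 2 ≤ k := by omega
      have hmx : (p * X).coeff (k - 1) = - ∑ j ∈ J, α j := by
        have he : k - 1 = (k - 2) + 1 := by omega
        rw [he, coeff_mul_X]
        have := nextCoeff_of_natDegree_pos (p := p) (by omega)
        rw [hpd] at this
        have he2 : k - 1 - 1 = k - 2 := by omega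
        rw [he2] at this
        rw [← this, hp, prod_X_sub_C_nextCoeff]
      have hpc : p.coeff (k - 1) = 1 := by
        rw [← hpd, hm.coeff_natDegree]
      rw [hmx, hpc]; ring

/-- The polynomial whose evaluation is `Ψ_J`. -/
def PsiPoly {m : ℕ} (α : Fin m → F) (η : F) (J : Finset (Fin m)) : F[X] :=
  (∏ j ∈ J, (X - C (α j))) * (C η * X + C (1 + η * ∑ j ∈ J, α j))

lemma PsiPoly_eval {m : ℕ} (α : Fin m → F) (η : F) (J : Finset (Fin m)) (x : F) :
    (PsiPoly α η J).eval x = PsiRC α η J x := by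
  unfold PsiPoly PsiRC
  rw [eval_mul, eval_prod]
  simp only [eval_add, eval_mul, eval_sub, eval_X, eval_C]
  ring

lemma lemA {m k : ℕ} (hk : 0 < k) {α : Fin m → F} (hα : Function.Injective α) {η : F}
    {g : F[X]} (hg : g ≠ 0) (hd : g.natDegree ≤ k)
    (hrel : g.coeff k = η * g.coeff (k - 1)) {I : Finset (Fin m)} (hI : I.card = k)
    (hroot : ∀ j ∈ I, g.eval (α j) = 0) :
    η * ∑ i ∈ I, α i = -1 := by
  obtain ⟨q, hq⟩ := prod_dvd hα hg I hroot
  set p := ∏ j ∈ I, (X - C (α j)) with hp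
  have hm : p.Monic := prod_monic α I
  have hpd : p.natDegree = k := by rw [hp, prod_natDegree, hI]
  have hq0 : q ≠ 0 := by rintro rfl; rw [mul_zero] at hq; exact hg hq
  have hqd : q.natDegree = 0 := by
    have hnd := natDegree_mul hm.ne_zero hq0
    rw [← hq, hpd] at hnd
    omega
  have hqC : q = C (q.coeff 0) := eq_C_of_natDegree_eq_zero hqd
  set u := q.coeff 0 with hu
  have hu0 : u ≠ 0 := fun h => hq0 (by rw [hqC, h, map_zero])
  have hck : g.coeff k = u := by
    rw [hq, hqC, coeff_mul_C, ← hpd, hm.coeff_natDegree, one_mul]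
  have hck1 : g.coeff (k - 1) = (- ∑ i ∈ I, α i) * u := by
    rw [hq, hqC, coeff_mul_C]
    congr 1
    have := nextCoeff_of_natDegree_pos (p := p) (by omega)
    rw [hpd] at this
    rw [← this, hp, prod_X_sub_C_nextCoeff]
  rw [hck, hck1] at hrel
  have : (1 : F) * u = (η * -∑ i ∈ I, α i) * u := by linear_combination hrel
  have h2 := mul_right_cancel₀ hu0 this
  linear_combination h2

lemma lemB {m k : ℕ} (hk : 0 < k) {α : Fin m → F} (hα : Function.Injective α) {η : F}
    {g : F[X]} (hg : g ≠ 0) (hd : g.natDegree ≤ k)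
    (hrel : g.coeff k = η * g.coeff (k - 1)) {J : Finset (Fin m)} (hJ : J.card = k - 1)
    (hroot : ∀ j ∈ J, g.eval (α j) = 0) :
    ∃ s : F, s ≠ 0 ∧ g = C s * PsiPoly α η J := by
  obtain ⟨q, hq⟩ := prod_dvd hα hg J hroot
  set p := ∏ j ∈ J, (X - C (α j)) with hp
  have hm : p.Monic := prod_monic α J
  have hpd : p.natDegree = k - 1 := by rw [hp, prod_natDegree, hJ]
  have hq0 : q ≠ 0 := by rintro rfl; rw [mul_zero] at hq; exact hg hq
  have hqd : q.natDegree ≤ 1 := by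
    have hnd := natDegree_mul hm.ne_zero hq0
    rw [← hq, hpd] at hnd
    omega
  have hqexp : q = C (q.coeff 1) * X + C (q.coeff 0) := eq_X_add_C_of_natDegree_le_one hqd
  set d := q.coeff 1 with hdd
  set a := q.coeff 0 with haa
  obtain ⟨hh1, hh2, hh3⟩ := coeff_helper hk α hJ a d
  have hck : g.coeff k = d := by rw [hq, hqexp]; exact hh2
  have hck1 : g.coeff (k - 1) = a - d * ∑ j ∈ J, α j := by rw [hq, hqexp]; exact hh3
  have hrel2 : d = η * (a - d * ∑ j ∈ J, α j) := by
    have h := hrel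
    rw [hck, hck1] at h
    exact h
  by_cases hη : η = 0
  · subst hη
    have hd0 : d = 0 := by rw [hrel2, zero_mul]
    have ha0 : a ≠ 0 := by
      intro h0
      apply hq0
      rw [hqexp, hd0, h0]; simp
    refine ⟨a, ha0, ?_⟩
    rw [hq, hqexp, hd0]
    simp [PsiPoly]
    ring
  · have hdne : d ≠ 0 := by
      intro h0
      rw [h0] at hrel2
      have ha0 : a = 0 := by
        rcases mul_eq_zero.1 hrel2.symm with h | h
        · exact absurd h hη
        · linear_combination h
      apply hq0
      rw [hqexp, h0, ha0]; simp
    set s := d / η with hs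
    have hs0 : s ≠ 0 := div_ne_zero hdne hη
    have ha : a = s * (1 + η * ∑ j ∈ J, α j) := by
      rw [hs]
      field_simp
      linear_combination -hrel2
    have hd2 : d = s * η := by rw [hs]; field_simp
    refine ⟨s, hs0, ?_⟩
    rw [hq, hqexp, ha, hd2]
    simp only [PsiPoly, C_mul, C_add, C_1]
    ring

lemma wt_eq {n : ℕ} (x : Fin n → F) :
    wt x = (univ.filter fun i => x i ≠ 0).card := by
  rw [wt, Nat.card_eq_fintype_card, Fintype.card_subtype]

lemma wt_card {n : ℕ} (x : Fin n → F) :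
    wt x + (univ.filter fun i => x i = 0).card = n := by
  classical
  rw [wt_eq]
  have h := Finset.card_filter_add_card_filter_not
    (s := (univ : Finset (Fin n))) (p := fun i => x i ≠ 0)
  simp only [not_not] at h
  rw [h, card_univ, Fintype.card_fin]

lemma wt_le_of_zeros {n : ℕ} (x : Fin n → F) (Z : Finset (Fin n))
    (hZ : ∀ i ∈ Z, x i = 0) : wt x ≤ n - Z.card := by
  rw [wt_eq]
  have hsub : univ.filter (fun i => x i ≠ 0) ⊆ Zᶜ := by
    intro i hi
    exact mem_compl.2 fun hiZ => (mem_filter.1 hi).2 (hZ i hiZ)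
  calc (univ.filter fun i => x i ≠ 0).card ≤ Zᶜ.card := card_le_card hsub
    _ = n - Z.card := by rw [card_compl, Fintype.card_fin]

lemma wt_zero {n : ℕ} : wt (0 : Fin n → F) = 0 := by
  simp [wt_eq]

end AuxRCTRS

theorem stmt11 {F : Type*} [Field F] [Fintype F] {m k : ℕ}
    (hk0 : 0 < k) (hkn : k ≤ m + 1) (hq : m ≤ Fintype.card F)
    (α : Fin m → F) (hα : Function.Injective α) (b c lam η : F) :
    IsMDS (RCTRS k 1 (k - 1) η α b c lam) k ↔
      ((∀ I : Finset (Fin m), I.card = k → η * ∑ i ∈ I, α i ≠ -1) ∧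
       (∀ J : Finset (Fin m), J.card = k - 1 →
          PsiRC α η J b ≠ lam * PsiRC α η J c)) := by
  classical
  set E := Emap k η α b c lam with hEdef
  have hE : RCTRS k 1 (k - 1) η α b c lam = LinearMap.range E := rctrs_eq_range k η α b c lam
  constructor
  · rintro ⟨hdim, hdist⟩
    rw [hE] at hdim
    have hker : LinearMap.ker E = ⊥ := by
      have h1 := LinearMap.finrank_range_add_finrank_ker E
      rw [hdim, Module.finrank_fin_fun] at h1
      exact Submodule.finrank_eq_zero.1 (by omega)
    have hinj : ∀ f : Fin k → F, f ≠ 0 → E f ≠ 0 := by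
      intro f hf h0
      have hmem : f ∈ LinearMap.ker E := LinearMap.mem_ker.2 h0
      rw [hker, Submodule.mem_bot] at hmem
      exact hf hmem
    constructor
    · intro I hI hcon
      have hη : η ≠ 0 := by
        rintro rfl
        rw [zero_mul] at hcon
        exact zero_ne_one (by linear_combination -hcon)
      set p := ∏ i ∈ I, (X - C (α i)) with hp
      have hm : p.Monic := prod_monic α I
      have hpd : p.natDegree = k := by rw [hp, prod_natDegree, hI]
      set g : Polynomial F := C η * p with hgdef
      have hgd : g.natDegree ≤ k := by rw [hgdef, natDegree_C_mul hη, hpd]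
      have hck : g.coeff k = η := by
        rw [hgdef, coeff_C_mul, ← hpd, hm.coeff_natDegree, mul_one]
      have hck1 : g.coeff (k - 1) = 1 := by
        rw [hgdef, coeff_C_mul]
        have hn := nextCoeff_of_natDegree_pos (p := p) (by omega)
        rw [hpd] at hn
        rw [← hn, hp, prod_X_sub_C_nextCoeff]
        linear_combination -hcon
      have hrel : g.coeff k = η * g.coeff (k - 1) := by rw [hck, hck1, mul_one]
      set f : Fin k → F := fun i => g.coeff i with hfdef
      have hfg : twPoly k 1 (k - 1) η f = g := tw_eq_of hk0 η g hgd hrel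
      have hf0 : f ≠ 0 := by
        intro h0
        have := congrFun h0 ⟨k - 1, Nat.sub_lt hk0 Nat.one_pos⟩
        rw [hfdef] at this
        simp only [Pi.zero_apply] at this
        rw [hck1] at this
        exact one_ne_zero this
      have hw0 : E f ≠ 0 := hinj f hf0
      have hmem : E f ∈ RCTRS k 1 (k - 1) η α b c lam := by
        rw [hE]; exact ⟨f, rfl⟩
      have hd := hdist _ hmem hw0
      have hzeros : ∀ j ∈ I.map Fin.castSuccEmb, E f j = 0 := by
        intro j hj
        obtain ⟨i, hi, rfl⟩ := Finset.mem_map.1 hj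
        show E f (Fin.castSucc i) = 0
        rw [hEdef, Emap_castSucc, hfg, hgdef]
        rw [eval_mul, hp, eval_prod]
        rw [Finset.prod_eq_zero hi (by simp)]
        ring
      have hwt := wt_le_of_zeros (E f) _ hzeros
      rw [Finset.card_map, hI] at hwt
      omega
    · intro J hJ hcon
      set g : Polynomial F := PsiPoly α η J with hgdef
      obtain ⟨hh1, hh2, hh3⟩ := coeff_helper hk0 α hJ (1 + η * ∑ j ∈ J, α j) η
      have hgd : g.natDegree ≤ k := hh1
      have hck : g.coeff k = η := hh2
      have hck1 : g.coeff (k - 1) = 1 := by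
        rw [hgdef, PsiPoly]
        rw [hh3]; ring
      have hrel : g.coeff k = η * g.coeff (k - 1) := by rw [hck, hck1, mul_one]
      set f : Fin k → F := fun i => g.coeff i with hfdef
      have hfg : twPoly k 1 (k - 1) η f = g := tw_eq_of hk0 η g hgd hrel
      have hf0 : f ≠ 0 := by
        intro h0
        have := congrFun h0 ⟨k - 1, Nat.sub_lt hk0 Nat.one_pos⟩
        rw [hfdef] at this
        simp only [Pi.zero_apply] at this
        rw [hck1] at this
        exact one_ne_zero this
      have hw0 : E f ≠ 0 := hinj f hf0
      have hmem : E f ∈ RCTRS k 1 (k - 1) η α b c lam := by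
        rw [hE]; exact ⟨f, rfl⟩
      have hd := hdist _ hmem hw0
      set Z : Finset (Fin (m + 1)) := insert (Fin.last m) (J.map Fin.castSuccEmb) with hZ
      have hzeros : ∀ j ∈ Z, E f j = 0 := by
        intro j hj
        rcases Finset.mem_insert.1 hj with rfl | hj'
        · rw [hEdef, Emap_last, hfg, hgdef, PsiPoly_eval, PsiPoly_eval, hcon]
          ring
        · obtain ⟨i, hi, rfl⟩ := Finset.mem_map.1 hj'
          show E f (Fin.castSucc i) = 0
          rw [hEdef, Emap_castSucc, hfg, hgdef, PsiPoly, eval_mul, eval_prod]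
          rw [Finset.prod_eq_zero hi (by simp)]
          ring
      have hZcard : Z.card = k := by
        rw [hZ, Finset.card_insert_of_notMem, Finset.card_map, hJ]
        · omega
        · intro hlast
          obtain ⟨i, _, hcast⟩ := Finset.mem_map.1 hlast
          exact absurd hcast (Fin.ne_of_lt (Fin.castSucc_lt_last i))
      have hwt := wt_le_of_zeros (E f) Z hzeros
      rw [hZcard] at hwt
      omega
  · rintro ⟨h1, h2⟩
    have key : ∀ f : Fin k → F, f ≠ 0 → (m + 1) - k + 1 ≤ wt (E f) := by
      intro f hf
      set g := twPoly k 1 (k - 1) η f with hgdef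
      have hg0 : g ≠ 0 := tw_ne_zero hk0 η hf
      by_contra hlt
      push_neg at hlt
      have hwtle : wt (E f) ≤ (m + 1) - k := by omega
      have hcard := wt_card (E f)
      set Z0 := univ.filter (fun j => E f j = 0) with hZ0def
      have hZ0 : k ≤ Z0.card := by omega
      set Z1 := univ.filter (fun i : Fin m => g.eval (α i) = 0) with hZ1def
      have hsub : Z0 ⊆ insert (Fin.last m) (Z1.map Fin.castSuccEmb) := by
        intro j hj
        rcases Fin.eq_castSucc_or_eq_last j with ⟨i, rfl⟩ | rfl
        · refine Finset.mem_insert_of_mem (Finset.mem_map.2 ⟨i, ?_, rfl⟩)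
          refine Finset.mem_filter.2 ⟨Finset.mem_univ _, ?_⟩
          have := (Finset.mem_filter.1 hj).2
          rwa [hEdef, Emap_castSucc, ← hgdef] at this
        · exact Finset.mem_insert_self _ _
      by_cases hlastz : E f (Fin.last m) = 0
      · have hZ1c : k - 1 ≤ Z1.card := by
          have hle := Finset.card_le_card hsub
          have hle2 : (insert (Fin.last m) (Z1.map Fin.castSuccEmb)).card
              ≤ Z1.card + 1 := by
            refine le_trans (Finset.card_insert_le _ _) ?_
            rw [Finset.card_map]
          omega
        obtain ⟨J, hJsub, hJcard⟩ := Finset.exists_subset_card_eq hZ1c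
        have hroot : ∀ j ∈ J, g.eval (α j) = 0 := fun j hj =>
          (Finset.mem_filter.1 (hJsub hj)).2
        obtain ⟨s, hs, hgs⟩ := lemB hk0 hα hg0 (tw_natDegree_le hk0 η f)
          (tw_rel hk0 η f) hJcard hroot
        have hev : g.eval b - lam * g.eval c = 0 := by
          rw [hgdef]
          rw [← Emap_last η α b c lam f]
          exact hlastz
        rw [hgs] at hev
        simp only [eval_mul, eval_C, PsiPoly_eval] at hev
        refine h2 J hJcard ?_
        have : s * (PsiRC α η J b - lam * PsiRC α η J c) = 0 := by linear_combination hev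
        rcases mul_eq_zero.1 this with h | h
        · exact absurd h hs
        · linear_combination h
      · have hsub2 : Z0 ⊆ Z1.map Fin.castSuccEmb := by
          intro j hj
          rcases Finset.mem_insert.1 (hsub hj) with rfl | h
          · exact absurd (Finset.mem_filter.1 hj).2 hlastz
          · exact h
        have hZ1c : k ≤ Z1.card := by
          have := Finset.card_le_card hsub2
          rw [Finset.card_map] at this
          omega
        obtain ⟨I, hIsub, hIcard⟩ := Finset.exists_subset_card_eq hZ1c
        have hroot : ∀ j ∈ I, g.eval (α j) = 0 := fun j hj =>
          (Finset.mem_filter.1 (hIsub hj)).2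
        exact h1 I hIcard (lemA hk0 hα hg0 (tw_natDegree_le hk0 η f)
          (tw_rel hk0 η f) hIcard hroot)
    have hinj : Function.Injective E := by
      rw [← LinearMap.ker_eq_bot]
      rw [Submodule.eq_bot_iff]
      intro f hf
      by_contra hf0
      have hk1 := key f hf0
      rw [LinearMap.mem_ker.1 hf, wt_zero] at hk1
      omega
    constructor
    · rw [hE, LinearMap.finrank_range_of_inj hinj, Module.finrank_fin_fun]
    · intro x hx hx0
      rw [hE] at hx
      obtain ⟨f, rfl⟩ := hx
      exact key f fun h => hx0 (by rw [h, map_zero])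
end

section
/- Let F_{q0} be a subfield of the finite field F_q, let G = {1, μ_1, …, μ_{n−1}} be a subgroup of F_{q0}^* of order n, let b,c ∈ F_{q0} with b ≠ c, and set α_i = (b − μ_i c)/(1 − μ_i) for i = 1,…,n−1. If 0 < k ≤ n, λ ∈ F_{q0} \ G and η ∈ F_q \ F_{q0}^*, then the codes RCTRS_{k−1,1}(α,b,c,λ,η) and RCTRS_{k−1,1}(α,b,c,λ,η,∞) are MDS with parameters [n, k, n−k+1] and [n+1, k, n−k+2] respectively. -/
open Polynomial Finset

namespace Stmt14Aux

open Polynomial Finset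

variable {F : Type*} [Field F]

lemma twPoly_eq (k' : ℕ) (η : F) (f : Fin (k' + 1) → F) :
    twPoly (k' + 1) 1 k' η f =
      (∑ i : Fin (k' + 1), C (f i) * X ^ (i : ℕ)) + C (η * f (Fin.last k')) * X ^ (k' + 1) := by
  unfold twPoly
  rw [dif_pos (Nat.lt_succ_self k')]
  norm_num [Fin.last]

lemma twPoly_coeff (k' : ℕ) (η : F) (f : Fin (k' + 1) → F) (j : ℕ) :
    (twPoly (k' + 1) 1 k' η f).coeff j =
      (if hj : j < k' + 1 then f ⟨j, hj⟩ else 0) +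
        (if j = k' + 1 then η * f (Fin.last k') else 0) := by
  rw [twPoly_eq, coeff_add, finset_sum_coeff]
  congr 1
  · split_ifs with hj
    · rw [Finset.sum_eq_single (⟨j, hj⟩ : Fin (k' + 1))]
      · simp
      · intro i _ hne
        have : (i : ℕ) ≠ j := fun h => hne (Fin.ext h)
        simp [coeff_C_mul, coeff_X_pow, Ne.symm this]
      · simp
    · apply Finset.sum_eq_zero
      intro i _
      have : j ≠ (i : ℕ) := by omega
      simp [coeff_C_mul, coeff_X_pow, this]
  · simp [mul_assoc, coeff_C_mul, coeff_X_pow, mul_ite]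

lemma twPoly_coeff_le (k' : ℕ) (η : F) (f : Fin (k' + 1) → F) (j : ℕ) (hj : j < k' + 1) :
    (twPoly (k' + 1) 1 k' η f).coeff j = f ⟨j, hj⟩ := by
  rw [twPoly_coeff, dif_pos hj, if_neg (by omega), add_zero]

lemma twPoly_coeff_top (k' : ℕ) (η : F) (f : Fin (k' + 1) → F) :
    (twPoly (k' + 1) 1 k' η f).coeff (k' + 1) = η * f (Fin.last k') := by
  rw [twPoly_coeff, dif_neg (by omega), if_pos rfl, zero_add]

lemma twPoly_natDegree_le (k' : ℕ) (η : F) (f : Fin (k' + 1) → F) :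
    (twPoly (k' + 1) 1 k' η f).natDegree ≤ k' + 1 := by
  rw [natDegree_le_iff_coeff_eq_zero]
  intro N hN
  rw [twPoly_coeff, dif_neg (by omega), if_neg (by omega), add_zero]

lemma twPoly_eq_zero (k' : ℕ) (η : F) (f : Fin (k' + 1) → F)
    (h : twPoly (k' + 1) 1 k' η f = 0) : f = 0 := by
  funext i
  have := twPoly_coeff_le k' η f i i.isLt
  rw [h, coeff_zero] at this
  simpa using this.symm

lemma twPoly_add (k t h : ℕ) (η : F) (f g : Fin k → F) :
    twPoly k t h η (f + g) = twPoly k t h η f + twPoly k t h η g := by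
  unfold twPoly
  have hd : (if hh : h < k then (f + g) ⟨h, hh⟩ else 0) =
      (if hh : h < k then f ⟨h, hh⟩ else 0) + (if hh : h < k then g ⟨h, hh⟩ else 0) := by
    split_ifs <;> simp
  rw [hd]
  simp only [Pi.add_apply, C_add, mul_add, add_mul, Finset.sum_add_distrib]
  ring

lemma twPoly_smul (k t h : ℕ) (η : F) (a : F) (f : Fin k → F) :
    twPoly k t h η (a • f) = a • twPoly k t h η f := by
  unfold twPoly
  have hd : (η * if hh : h < k then (a • f) ⟨h, hh⟩ else 0) =
      a * (η * if hh : h < k then f ⟨h, hh⟩ else 0) := by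
    split_ifs
    · simp [Pi.smul_apply, smul_eq_mul]; ring
    · simp
  rw [hd]
  simp only [Pi.smul_apply, smul_eq_mul, C_mul, smul_eq_C_mul]
  rw [mul_add, Finset.mul_sum]
  congr 1
  · exact Finset.sum_congr rfl fun i _ => by ring
  · ring

lemma factor_lemma {m : ℕ} (α : Fin m → F) (hαinj : Function.Injective α)
    (g : F[X]) (hg : g ≠ 0) (J : Finset (Fin m)) (hroots : ∀ j ∈ J, g.IsRoot (α j)) :
    ∃ q : F[X], q ≠ 0 ∧ g = (∏ j ∈ J, (X - C (α j))) * q ∧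
      g.natDegree = J.card + q.natDegree := by
  have hdvd : (∏ j ∈ J, (X - C (α j))) ∣ g :=
    Finset.prod_dvd_of_coprime
      (Set.Pairwise.mono (Set.subset_univ _)
        ((Polynomial.pairwise_coprime_X_sub_C hαinj).set_pairwise _))
      (fun j _hj => (dvd_iff_isRoot).mpr (hroots j _hj))
  obtain ⟨q, hq⟩ := hdvd
  have hP : (∏ j ∈ J, (X - C (α j))).Monic :=
    monic_prod_of_monic _ _ fun j _ => monic_X_sub_C _
  have hq0 : q ≠ 0 := by rintro rfl; rw [mul_zero] at hq; exact hg hq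
  refine ⟨q, hq0, hq, ?_⟩
  rw [hq, natDegree_mul hP.ne_zero hq0, natDegree_prod _ _ fun j _ => X_sub_C_ne_zero _]
  simp [natDegree_X_sub_C]

lemma P_natDegree {m : ℕ} (α : Fin m → F) (J : Finset (Fin m)) :
    (∏ j ∈ J, (X - C (α j))).natDegree = J.card := by
  rw [natDegree_prod _ _ fun j _ => X_sub_C_ne_zero _]
  simp [natDegree_X_sub_C]

lemma P_nextCoeff {m : ℕ} (α : Fin m → F) (J : Finset (Fin m)) :
    (∏ j ∈ J, (X - C (α j))).nextCoeff = -∑ j ∈ J, α j := by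
  rw [Monic.nextCoeff_prod _ _ fun j _ => monic_X_sub_C _]
  simp [nextCoeff_X_sub_C]

lemma P_evals {m : ℕ} (α μ : Fin m → F) (b c : F)
    (hbα : ∀ i, b - α i = μ i * (c - α i)) (hcα : ∀ i, c - α i ≠ 0) (J : Finset (Fin m)) :
    eval c (∏ j ∈ J, (X - C (α j))) ≠ 0 ∧
      eval b (∏ j ∈ J, (X - C (α j))) =
        (∏ j ∈ J, μ j) * eval c (∏ j ∈ J, (X - C (α j))) := by
  simp only [eval_prod, eval_sub, eval_X, eval_C]
  constructor
  · exact Finset.prod_ne_zero_iff.mpr fun j _ => hcα j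
  · rw [← Finset.prod_mul_distrib]
    exact Finset.prod_congr rfl fun j _ => hbα j

/-- Degree-`|J|` case: the extra coordinate forces `λ` into the group. -/
lemma L1 {m : ℕ} (K₀ : Subfield F) (α μ : Fin m → F) (b c lam : F)
    (hαinj : Function.Injective α)
    (hbα : ∀ i, b - α i = μ i * (c - α i)) (hcα : ∀ i, c - α i ≠ 0)
    (hMlam : ∀ J : Finset (Fin m), (∏ j ∈ J, μ j) ≠ lam)
    (g : F[X]) (hg : g ≠ 0) (J : Finset (Fin m)) (hdeg : g.natDegree ≤ J.card)
    (hroots : ∀ j ∈ J, g.IsRoot (α j))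
    (heval : eval b g = lam * eval c g) : False := by
  obtain ⟨q, hq0, hgP, hdeg'⟩ := factor_lemma α hαinj g hg J hroots
  have hqd : q.natDegree = 0 := by omega
  have hqC : q = C (q.coeff 0) := eq_C_of_natDegree_eq_zero hqd
  set a := q.coeff 0 with ha
  have ha0 : a ≠ 0 := fun h => hq0 (by rw [hqC, h, C_0])
  obtain ⟨hPc, hPb⟩ := P_evals α μ b c hbα hcα J
  rw [hgP, hqC] at heval
  simp only [eval_mul, eval_C] at heval
  rw [hPb] at heval
  have : (∏ j ∈ J, μ j) = lam := by
    have h1 : ((∏ j ∈ J, μ j) - lam) * (eval c (∏ j ∈ J, (X - C (α j))) * a) = 0 := by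
      linear_combination heval
    rcases mul_eq_zero.mp h1 with h | h
    · exact sub_eq_zero.mp h
    · exact absurd h (mul_ne_zero hPc ha0)
  exact hMlam J this

/-- Full-degree case: `k` roots force `η` into the subfield. -/
lemma L2 {m : ℕ} (K₀ : Subfield F) (η : F) (hη : η = 0 ∨ η ∉ K₀)
    (α : Fin m → F) (hαinj : Function.Injective α) (hαK : ∀ i, α i ∈ K₀)
    (k' : ℕ) (g : F[X]) (hg : g ≠ 0) (hdeg : g.natDegree ≤ k' + 1)
    (hrel : g.coeff (k' + 1) = η * g.coeff k')
    (J : Finset (Fin m)) (hJ : J.card = k' + 1)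
    (hroots : ∀ j ∈ J, g.IsRoot (α j)) : False := by
  obtain ⟨q, hq0, hgP, hdeg'⟩ := factor_lemma α hαinj g hg J hroots
  have hqd : q.natDegree = 0 := by omega
  have hqC : q = C (q.coeff 0) := eq_C_of_natDegree_eq_zero hqd
  set a := q.coeff 0 with ha
  have ha0 : a ≠ 0 := fun h => hq0 (by rw [hqC, h, C_0])
  have hP : (∏ j ∈ J, (X - C (α j))).Monic :=
    monic_prod_of_monic _ _ fun j _ => monic_X_sub_C _
  have hPd : (∏ j ∈ J, (X - C (α j))).natDegree = k' + 1 := by rw [P_natDegree, hJ]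
  have hck : g.coeff (k' + 1) = a := by
    rw [hgP, hqC, coeff_mul_C, ← hPd, hP.coeff_natDegree, one_mul]
  have hck' : g.coeff k' = (-∑ j ∈ J, α j) * a := by
    rw [hgP, hqC, coeff_mul_C, ← P_nextCoeff α J,
      nextCoeff_of_natDegree_pos (by omega)]
    congr 2
    omega
  rw [hck, hck'] at hrel
  set S := ∑ j ∈ J, α j with hS
  have h1 : η * (-S) = 1 := by
    have h2 : (η * (-S) - 1) * a = 0 := by linear_combination hrel.symm
    rcases mul_eq_zero.mp h2 with h | h
    · exact sub_eq_zero.mp h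
    · exact absurd h ha0
  have hη0 : η ≠ 0 := by rintro rfl; simp at h1
  have hSK : -S ∈ K₀ := K₀.neg_mem (K₀.sum_mem fun j _ => hαK j)
  have : η ∈ K₀ := by
    rw [eq_inv_of_mul_eq_one_left h1]
    exact K₀.inv_mem hSK
  rcases hη with h | h
  · exact hη0 h
  · exact h this

/-- Degree `k-1` case with the twisted extra coordinate. -/
lemma L3 {m : ℕ} (K₀ : Subfield F) (η : F) (hη : η = 0 ∨ η ∉ K₀)
    (α μ : Fin m → F) (hαinj : Function.Injective α) (hαK : ∀ i, α i ∈ K₀)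
    (hμK : ∀ i, μ i ∈ K₀)
    (b c lam : F) (hbK : b ∈ K₀) (hcK : c ∈ K₀) (hlamK : lam ∈ K₀)
    (hbα : ∀ i, b - α i = μ i * (c - α i)) (hcα : ∀ i, c - α i ≠ 0)
    (hMlam : ∀ J : Finset (Fin m), (∏ j ∈ J, μ j) ≠ lam)
    (k' : ℕ) (g : F[X]) (hg : g ≠ 0) (hdeg : g.natDegree ≤ k' + 1)
    (hrel : g.coeff (k' + 1) = η * g.coeff k')
    (J : Finset (Fin m)) (hJ : J.card = k')
    (hroots : ∀ j ∈ J, g.IsRoot (α j))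
    (heval : eval b g = lam * eval c g) : False := by
  obtain ⟨q, hq0, hgP, hdeg'⟩ := factor_lemma α hαinj g hg J hroots
  have hqd : q.natDegree ≤ 1 := by omega
  have hqC : q = C (q.coeff 1) * X + C (q.coeff 0) := eq_X_add_C_of_natDegree_le_one hqd
  set v := q.coeff 1 with hv
  set u := q.coeff 0 with hu
  have hP : (∏ j ∈ J, (X - C (α j))).Monic :=
    monic_prod_of_monic _ _ fun j _ => monic_X_sub_C _
  have hPd : (∏ j ∈ J, (X - C (α j))).natDegree = k' := by rw [P_natDegree, hJ]
  set P := ∏ j ∈ J, (X - C (α j)) with hPdef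
  set S := ∑ j ∈ J, α j with hS
  have hgPvu : g = P * C v * X + P * C u := by rw [hgP, hqC]; ring
  have hcoeff_top : g.coeff (k' + 1) = v := by
    rw [hgPvu, coeff_add, coeff_mul_X, coeff_mul_C, coeff_mul_C, ← hPd,
      hP.coeff_natDegree, coeff_eq_zero_of_natDegree_lt (by omega), one_mul, zero_mul,
      add_zero]
  have hPk : P.coeff k' = 1 := by rw [← hPd]; exact hP.coeff_natDegree
  have hcoeff_next : g.coeff k' = u - v * S := by
    rw [hgPvu, coeff_add, coeff_mul_C, hPk, one_mul]
    rcases Nat.eq_zero_or_pos k' with hk | hk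
    · have hJe : J = ∅ := Finset.card_eq_zero.mp (by omega)
      subst hk
      have : (P * C v * X).coeff 0 = 0 := by simp [coeff_mul_X_zero]
      rw [this, hS, hJe]
      simp
    · obtain ⟨j', rfl⟩ : ∃ j', k' = j' + 1 := ⟨k' - 1, by omega⟩
      rw [coeff_mul_X, coeff_mul_C]
      have : P.coeff j' = -S := by
        have h6 : P.nextCoeff = -S := by rw [hPdef, P_nextCoeff, hS]
        have h7 : 0 < P.natDegree := by omega
        rw [← h6, nextCoeff_of_natDegree_pos h7, hPd]
        congr 1
      rw [this]
      ring
  obtain ⟨hPc, hPb⟩ := P_evals α μ b c hbα hcα J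
  rw [hgPvu] at heval
  simp only [eval_add, eval_mul, eval_C, eval_X] at heval
  rw [hPb] at heval
  set M := ∏ j ∈ J, μ j with hM
  set Pc := eval c P with hPc'
  -- heval : M * Pc * v * b + M * Pc * u = lam * (Pc * v * c + Pc * u)
  have hMl : M - lam ≠ 0 := sub_ne_zero.mpr (hMlam J)
  have hkey : M * (v * b + u) = lam * (v * c + u) := by
    have h1 : (M * (v * b + u) - lam * (v * c + u)) * Pc = 0 := by
      linear_combination heval
    rcases mul_eq_zero.mp h1 with h | h
    · exact sub_eq_zero.mp h
    · exact absurd h hPc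
  by_cases hv0 : v = 0
  · have hu0 : u = 0 := by
      have h2 : u * (M - lam) = 0 := by rw [hv0] at hkey; linear_combination hkey
      rcases mul_eq_zero.mp h2 with h | h
      · exact h
      · exact absurd h hMl
    exact hq0 (by rw [hqC, hv0, hu0]; simp)
  · have hη0 : η ≠ 0 := by
      rintro rfl
      rw [hcoeff_top, zero_mul] at hrel
      exact hv0 hrel
    have hηK : η ∉ K₀ := by rcases hη with h | h; exacts [absurd h hη0, h]
    set w := (lam * c - M * b) / (M - lam) with hw
    have huw : u = v * w := by
      rw [hw]
      field_simp
      linear_combination hkey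
    have h3 : η * (w - S) = 1 := by
      have h4 : v = η * (v * w - v * S) := by
        rw [← huw, ← hcoeff_next, ← hrel, hcoeff_top]
      have h5 : (η * (w - S) - 1) * v = 0 := by linear_combination -h4
      rcases mul_eq_zero.mp h5 with h | h
      · exact sub_eq_zero.mp h
      · exact absurd h hv0
    have hMK : M ∈ K₀ := K₀.prod_mem fun j _ => hμK j
    have hwK : w ∈ K₀ := K₀.div_mem (K₀.sub_mem (K₀.mul_mem hlamK hcK) (K₀.mul_mem hMK hbK))
      (K₀.sub_mem hMK hlamK)
    have hSK : S ∈ K₀ := K₀.sum_mem fun j _ => hαK j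
    have : η ∈ K₀ := by
      rw [eq_inv_of_mul_eq_one_left h3]
      exact K₀.inv_mem (K₀.sub_mem hwK hSK)
    exact hηK this

/-- Encoding linear map of the RCTRS code. -/
noncomputable def encMap (k t h : ℕ) (η : F) {m : ℕ} (α : Fin m → F) (b c lam : F) :
    (Fin k → F) →ₗ[F] (Fin (m + 1) → F) where
  toFun f := Fin.snoc (fun i => (twPoly k t h η f).eval (α i))
      ((twPoly k t h η f).eval b - lam * (twPoly k t h η f).eval c)
  map_add' f g := by
    funext i
    refine Fin.lastCases ?_ ?_ i
    · simp [Fin.snoc_last, twPoly_add]; ring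
    · intro j; simp [Fin.snoc_castSucc, twPoly_add]
  map_smul' a f := by
    funext i
    refine Fin.lastCases ?_ ?_ i
    · simp [Fin.snoc_last, twPoly_smul]; ring
    · intro j; simp [Fin.snoc_castSucc, twPoly_smul]

/-- Encoding linear map of the extended RCTRS code. -/
noncomputable def encMapExt (k t h : ℕ) (η : F) {m : ℕ} (α : Fin m → F) (b c lam : F) :
    (Fin k → F) →ₗ[F] (Fin (m + 2) → F) where
  toFun f := Fin.snoc (encMap k t h η α b c lam f) (topCoeffFin f)
  map_add' f g := by
    have ht : topCoeffFin (f + g) = topCoeffFin f + topCoeffFin g := by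
      unfold topCoeffFin; split_ifs <;> simp
    funext i
    refine Fin.lastCases ?_ ?_ i
    · simp [Fin.snoc_last, ht]
    · intro j; simp [Fin.snoc_castSucc]
  map_smul' a f := by
    have ht : topCoeffFin (a • f) = a * topCoeffFin f := by
      unfold topCoeffFin; split_ifs <;> simp
    funext i
    refine Fin.lastCases ?_ ?_ i
    · simp [Fin.snoc_last, ht]
    · intro j; simp [Fin.snoc_castSucc]

lemma encMapExt_apply (k t h : ℕ) (η : F) {m : ℕ} (α : Fin m → F) (b c lam : F)
    (f : Fin k → F) :
    encMapExt k t h η α b c lam f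
      = Fin.snoc (encMap k t h η α b c lam f) (topCoeffFin f) := rfl

lemma RCTRS_eq_range (k t h : ℕ) (η : F) {m : ℕ} (α : Fin m → F) (b c lam : F) :
    RCTRS k t h η α b c lam = LinearMap.range (encMap k t h η α b c lam) := by
  unfold RCTRS
  have hw : rctrsWords k t h η α b c lam
      = ↑(LinearMap.range (encMap k t h η α b c lam)) := by
    ext w
    simp only [rctrsWords, Set.mem_setOf_eq, SetLike.mem_coe, LinearMap.mem_range, encMap,
      LinearMap.coe_mk, AddHom.coe_mk]
    exact ⟨fun ⟨f, hf⟩ => ⟨f, hf.symm⟩, fun ⟨f, hf⟩ => ⟨f, hf.symm⟩⟩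
  rw [hw, Submodule.span_eq]

lemma RCTRSext_eq_range (k t h : ℕ) (η : F) {m : ℕ} (α : Fin m → F) (b c lam : F) :
    RCTRSext k t h η α b c lam = LinearMap.range (encMapExt k t h η α b c lam) := by
  unfold RCTRSext
  have hw : rctrsWordsExt k t h η α b c lam
      = ↑(LinearMap.range (encMapExt k t h η α b c lam)) := by
    ext w
    simp only [rctrsWordsExt, Set.mem_setOf_eq, SetLike.mem_coe, LinearMap.mem_range,
      encMapExt, encMap, LinearMap.coe_mk, AddHom.coe_mk]
    exact ⟨fun ⟨f, hf⟩ => ⟨f, hf.symm⟩, fun ⟨f, hf⟩ => ⟨f, hf.symm⟩⟩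
  rw [hw, Submodule.span_eq]

open scoped Classical in
lemma wt_eq_card_filter {n : ℕ} (x : Fin n → F) :
    wt x = (Finset.univ.filter (fun i => ¬ (x i = 0))).card := by
  classical
  rw [wt, Nat.card_eq_fintype_card]
  exact Fintype.card_subtype _

/-- The master lemma about zero patterns of nonzero twisted codewords. -/
lemma key {m : ℕ} (K₀ : Subfield F) (η : F) (hη : η = 0 ∨ η ∉ K₀)
    (α μ : Fin m → F) (hαinj : Function.Injective α)
    (hαK : ∀ i, α i ∈ K₀) (hμK : ∀ i, μ i ∈ K₀)
    (b c lam : F) (hbK : b ∈ K₀) (hcK : c ∈ K₀) (hlamK : lam ∈ K₀)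
    (hbα : ∀ i, b - α i = μ i * (c - α i)) (hcα : ∀ i, c - α i ≠ 0)
    (hMlam : ∀ J : Finset (Fin m), (∏ j ∈ J, μ j) ≠ lam)
    (k' : ℕ) (f : Fin (k' + 1) → F) (hf : f ≠ 0)
    (J : Finset (Fin m)) (hroots : ∀ j ∈ J, (twPoly (k' + 1) 1 k' η f).IsRoot (α j)) :
    J.card ≤ k' ∧
    (J.card = k' →
      eval b (twPoly (k' + 1) 1 k' η f) - lam * eval c (twPoly (k' + 1) 1 k' η f) ≠ 0) ∧
    (J.card = k' → f (Fin.last k') ≠ 0) ∧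
    (J.card + 1 = k' → f (Fin.last k') = 0 →
      eval b (twPoly (k' + 1) 1 k' η f) - lam * eval c (twPoly (k' + 1) 1 k' η f) ≠ 0) := by
  set g := twPoly (k' + 1) 1 k' η f with hgdef
  have hg : g ≠ 0 := fun h => hf (twPoly_eq_zero k' η f h)
  have hdeg : g.natDegree ≤ k' + 1 := twPoly_natDegree_le k' η f
  have hckt : g.coeff (k' + 1) = η * f (Fin.last k') := twPoly_coeff_top k' η f
  have hckl : g.coeff k' = f (Fin.last k') := by
    rw [hgdef, twPoly_coeff_le k' η f k' (Nat.lt_succ_self k')]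
    rfl
  have hrel : g.coeff (k' + 1) = η * g.coeff k' := by rw [hckt, hckl]
  have hdrop : f (Fin.last k') = 0 → ∀ N, k' ≤ N → g.coeff N = 0 := by
    intro h0 N hN
    have : N = k' ∨ N = k' + 1 ∨ k' + 1 < N := by omega
    rcases this with rfl | rfl | h
    · rw [hckl, h0]
    · rw [hckt, h0, mul_zero]
    · exact coeff_eq_zero_of_natDegree_lt (by omega)
  refine ⟨?_, ?_, ?_, ?_⟩
  · by_contra hcon
    push_neg at hcon
    obtain ⟨J', hJ'sub, hJ'card⟩ :=
      Finset.exists_subset_card_eq (show k' + 1 ≤ J.card from by omega)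
    exact L2 K₀ η hη α hαinj hαK k' g hg hdeg hrel J' hJ'card
      (fun j hj => hroots j (hJ'sub hj))
  · intro hJc heq0
    rw [sub_eq_zero] at heq0
    exact (L3 K₀ η hη α μ hαinj hαK hμK b c lam hbK hcK hlamK hbα hcα hMlam
      k' g hg hdeg hrel J hJc hroots heq0).elim
  · intro hJc hlast
    rcases Nat.eq_zero_or_pos k' with hk0 | hk0
    · apply hf
      funext i
      subst hk0
      have : i = Fin.last 0 := Fin.ext (by omega)
      rw [this, hlast]; rfl
    · have hdegd : g.natDegree ≤ k' - 1 := by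
        rw [natDegree_le_iff_coeff_eq_zero]
        intro N hN
        exact hdrop hlast N (by omega)
      obtain ⟨q, hq0, hgP, hdeg'⟩ := factor_lemma α hαinj g hg J hroots
      omega
  · intro hJc hlast heq0
    rw [sub_eq_zero] at heq0
    have hdegd : g.natDegree ≤ J.card := by
      rw [natDegree_le_iff_coeff_eq_zero]
      intro N hN
      exact hdrop hlast N (by omega)
    exact L1 K₀ α μ b c lam hαinj hbα hcα hMlam g hg J hdegd hroots heq0

end Stmt14Aux

theorem stmt14 {F : Type*} [Field F] [Fintype F] (K₀ : Subfield F)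
    (G : Subgroup Fˣ) {m k : ℕ} (μ : Fin m → F)
    (hGcard : Nat.card G = m + 1)
    (hGK : ∀ g : Fˣ, g ∈ G → (g : F) ∈ K₀)
    (hμinj : Function.Injective μ) (hμ1 : ∀ i, μ i ≠ 1)
    (hGenum : unitsImage G = insert (1 : F) (Set.range μ))
    (b c : F) (hb : b ∈ K₀) (hc : c ∈ K₀) (hbc : b ≠ c)
    (α : Fin m → F) (hα : ∀ i, α i = (b - μ i * c) / (1 - μ i))
    (hk0 : 0 < k) (hkn : k ≤ m + 1)
    (lam : F) (hlamK : lam ∈ K₀) (hlamG : lam ∉ unitsImage G)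
    (η : F) (hη : η = 0 ∨ η ∉ K₀) :
    IsMDS (RCTRS k 1 (k - 1) η α b c lam) k ∧
    IsMDS (RCTRSext k 1 (k - 1) η α b c lam) k := by
  classical
  obtain ⟨k', rfl⟩ : ∃ k', k = k' + 1 := ⟨k - 1, by omega⟩
  simp only [Nat.add_sub_cancel]
  have hμG : ∀ i, μ i ∈ unitsImage G := fun i => by
    rw [hGenum]; exact Set.mem_insert_of_mem _ ⟨i, rfl⟩
  have hμK : ∀ i, μ i ∈ K₀ := fun i => by
    obtain ⟨g, hgG, hge⟩ := hμG i
    exact hge ▸ hGK g hgG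
  have h1μ : ∀ i, (1 : F) - μ i ≠ 0 := fun i => sub_ne_zero.mpr (Ne.symm (hμ1 i))
  have hαK : ∀ i, α i ∈ K₀ := fun i => by
    rw [hα i]
    exact K₀.div_mem (K₀.sub_mem hb (K₀.mul_mem (hμK i) hc)) (K₀.sub_mem K₀.one_mem (hμK i))
  have hbα : ∀ i, b - α i = μ i * (c - α i) := fun i => by
    rw [hα i]
    field_simp [h1μ i]
    ring
  have hcα : ∀ i, c - α i ≠ 0 := fun i => by
    have h1 : c - α i = (c - b) / (1 - μ i) := by
      rw [hα i]
      field_simp [h1μ i]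
      ring
    rw [h1]
    exact div_ne_zero (sub_ne_zero.mpr (Ne.symm hbc)) (h1μ i)
  have hαinj : Function.Injective α := by
    intro i j hij
    apply hμinj
    have h1 := hbα i
    have h2 := hbα j
    rw [hij] at h1
    exact mul_right_cancel₀ (hcα j) (h1.symm.trans h2)
  have hGprod : ∀ J : Finset (Fin m), (∏ j ∈ J, μ j) ∈ unitsImage G := by
    intro J
    refine Finset.prod_induction _ _ ?_ ?_ ?_
    · rintro a bb ⟨g1, hg1, rfl⟩ ⟨g2, hg2, rfl⟩
      exact ⟨g1 * g2, G.mul_mem hg1 hg2, rfl⟩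
    · exact ⟨1, G.one_mem, rfl⟩
    · exact fun i _ => hμG i
  have hMlam : ∀ J : Finset (Fin m), (∏ j ∈ J, μ j) ≠ lam := fun J h => hlamG (h ▸ hGprod J)
  have hkey := Stmt14Aux.key K₀ η hη α μ hαinj hαK hμK b c lam hb hc hlamK hbα hcα hMlam k'
  have htop : ∀ f : Fin (k' + 1) → F, topCoeffFin f = f (Fin.last k') := by
    intro f
    rw [topCoeffFin, dif_pos (show k' + 1 - 1 < k' + 1 by omega)]
    exact congrArg f (Fin.val_injective (show k' + 1 - 1 = k' by omega))
  have hEc : ∀ (f : Fin (k' + 1) → F) (j : Fin m),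
      Stmt14Aux.encMap (k' + 1) 1 k' η α b c lam f (Fin.castSucc j) = eval (α j) (twPoly (k' + 1) 1 k' η f) := by
    intro f j
    simp [Stmt14Aux.encMap, Fin.snoc_castSucc]
  have hEl : ∀ f : Fin (k' + 1) → F,
      Stmt14Aux.encMap (k' + 1) 1 k' η α b c lam f (Fin.last m) = eval b (twPoly (k' + 1) 1 k' η f) - lam * eval c (twPoly (k' + 1) 1 k' η f) := by
    intro f
    simp [Stmt14Aux.encMap, Fin.snoc_last]
  have hXc : ∀ (f : Fin (k' + 1) → F) (j : Fin m),
      Stmt14Aux.encMapExt (k' + 1) 1 k' η α b c lam f (Fin.castSucc (Fin.castSucc j)) = eval (α j) (twPoly (k' + 1) 1 k' η f) := by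
    intro f j
    rw [Stmt14Aux.encMapExt_apply, Fin.snoc_castSucc]
    exact hEc f j
  have hXl : ∀ f : Fin (k' + 1) → F,
      Stmt14Aux.encMapExt (k' + 1) 1 k' η α b c lam f (Fin.castSucc (Fin.last m)) = eval b (twPoly (k' + 1) 1 k' η f) - lam * eval c (twPoly (k' + 1) 1 k' η f) := by
    intro f
    rw [Stmt14Aux.encMapExt_apply, Fin.snoc_castSucc]
    exact hEl f
  have hXt : ∀ f : Fin (k' + 1) → F,
      Stmt14Aux.encMapExt (k' + 1) 1 k' η α b c lam f (Fin.last (m + 1)) = f (Fin.last k') := by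
    intro f
    rw [Stmt14Aux.encMapExt_apply, Fin.snoc_last]
    exact htop f
  have hEzero : ∀ f : Fin (k' + 1) → F, Stmt14Aux.encMap (k' + 1) 1 k' η α b c lam f = 0 → f = 0 := by
    intro f h0
    by_contra hf
    have hroots : ∀ j ∈ (univ : Finset (Fin m)), (twPoly (k' + 1) 1 k' η f).IsRoot (α j) := by
      intro j _
      have h1 := congrFun h0 (Fin.castSucc j)
      rw [hEc] at h1
      exact h1
    obtain ⟨ha, hb', -, -⟩ := hkey f hf univ hroots
    have hcard : (univ : Finset (Fin m)).card = m := by simp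
    have h2 := congrFun h0 (Fin.last m)
    rw [hEl] at h2
    exact hb' (by omega) h2
  have hEinj : Function.Injective (Stmt14Aux.encMap (k' + 1) 1 k' η α b c lam) := by
    intro f f' hff
    have h1 : Stmt14Aux.encMap (k' + 1) 1 k' η α b c lam (f - f') = 0 := by rw [map_sub, hff, sub_self]
    have := hEzero _ h1
    exact sub_eq_zero.mp this
  have hXinj : Function.Injective (Stmt14Aux.encMapExt (k' + 1) 1 k' η α b c lam) := by
    intro f f' hff
    rw [Stmt14Aux.encMapExt_apply, Stmt14Aux.encMapExt_apply] at hff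
    have h1 : Stmt14Aux.encMap (k' + 1) 1 k' η α b c lam f
        = Stmt14Aux.encMap (k' + 1) 1 k' η α b c lam f' := by
      funext i
      have h2 := congrFun hff (Fin.castSucc i)
      rwa [Fin.snoc_castSucc, Fin.snoc_castSucc] at h2
    exact hEinj h1
  constructor
  · refine ⟨?_, ?_⟩
    · rw [Stmt14Aux.RCTRS_eq_range, LinearMap.finrank_range_of_inj hEinj]
      exact Module.finrank_fin_fun F
    · intro x hx hx0
      rw [Stmt14Aux.RCTRS_eq_range, LinearMap.mem_range] at hx
      obtain ⟨f, rfl⟩ := hx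
      have hf : f ≠ 0 := by rintro rfl; rw [map_zero] at hx0; exact hx0 rfl
      rw [Stmt14Aux.wt_eq_card_filter]
      have hsplit : (univ.filter (fun i => Stmt14Aux.encMap (k' + 1) 1 k' η α b c lam f i = 0)).card
          + (univ.filter (fun i => ¬ Stmt14Aux.encMap (k' + 1) 1 k' η α b c lam f i = 0)).card = m + 1 := by
        rw [Finset.card_filter_add_card_filter_not]; simp
      suffices hZk : (univ.filter (fun i => Stmt14Aux.encMap (k' + 1) 1 k' η α b c lam f i = 0)).card ≤ k' by omega
      by_contra hcon
      push_neg at hcon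
      have hroots : ∀ j ∈ univ.filter (fun j : Fin m => Stmt14Aux.encMap (k' + 1) 1 k' η α b c lam f (Fin.castSucc j) = 0),
          (twPoly (k' + 1) 1 k' η f).IsRoot (α j) := by
        intro j hj
        have h1 := (Finset.mem_filter.mp hj).2
        rw [hEc] at h1
        exact h1
      obtain ⟨ha, hb', -, -⟩ := hkey f hf _ hroots
      by_cases hlast : Stmt14Aux.encMap (k' + 1) 1 k' η α b c lam f (Fin.last m) = 0
      · have hsub : univ.filter (fun i => Stmt14Aux.encMap (k' + 1) 1 k' η α b c lam f i = 0) ⊆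
            insert (Fin.last m) ((univ.filter (fun j : Fin m =>
              Stmt14Aux.encMap (k' + 1) 1 k' η α b c lam f (Fin.castSucc j) = 0)).image Fin.castSucc) := by
          intro i hi
          rcases Fin.eq_castSucc_or_eq_last i with ⟨j, rfl⟩ | rfl
          · refine Finset.mem_insert_of_mem (Finset.mem_image_of_mem _ ?_)
            exact Finset.mem_filter.mpr ⟨Finset.mem_univ _, (Finset.mem_filter.mp hi).2⟩
          · exact Finset.mem_insert_self _ _
        have hc1 := (Finset.card_le_card hsub).trans
          ((Finset.card_insert_le _ _).trans (Nat.add_le_add_right Finset.card_image_le 1))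
        have h2 := hEl f
        rw [hlast] at h2
        exact hb' (by omega) h2.symm
      · have hsub : univ.filter (fun i => Stmt14Aux.encMap (k' + 1) 1 k' η α b c lam f i = 0) ⊆
            (univ.filter (fun j : Fin m => Stmt14Aux.encMap (k' + 1) 1 k' η α b c lam f (Fin.castSucc j) = 0)).image
              Fin.castSucc := by
          intro i hi
          rcases Fin.eq_castSucc_or_eq_last i with ⟨j, rfl⟩ | rfl
          · exact Finset.mem_image_of_mem _
              (Finset.mem_filter.mpr ⟨Finset.mem_univ _, (Finset.mem_filter.mp hi).2⟩)
          · exact absurd (Finset.mem_filter.mp hi).2 hlast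
        have hc1 := (Finset.card_le_card hsub).trans Finset.card_image_le
        omega
  · refine ⟨?_, ?_⟩
    · rw [Stmt14Aux.RCTRSext_eq_range, LinearMap.finrank_range_of_inj hXinj]
      exact Module.finrank_fin_fun F
    · intro x hx hx0
      rw [Stmt14Aux.RCTRSext_eq_range, LinearMap.mem_range] at hx
      obtain ⟨f, rfl⟩ := hx
      have hf : f ≠ 0 := by rintro rfl; rw [map_zero] at hx0; exact hx0 rfl
      rw [Stmt14Aux.wt_eq_card_filter]
      have hsplit : (univ.filter (fun i => Stmt14Aux.encMapExt (k' + 1) 1 k' η α b c lam f i = 0)).card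
          + (univ.filter (fun i => ¬ Stmt14Aux.encMapExt (k' + 1) 1 k' η α b c lam f i = 0)).card = m + 2 := by
        rw [Finset.card_filter_add_card_filter_not]; simp
      suffices hZk : (univ.filter (fun i => Stmt14Aux.encMapExt (k' + 1) 1 k' η α b c lam f i = 0)).card ≤ k' by omega
      by_contra hcon
      push_neg at hcon
      have hroots : ∀ j ∈ univ.filter (fun j : Fin m =>
          Stmt14Aux.encMapExt (k' + 1) 1 k' η α b c lam f (Fin.castSucc (Fin.castSucc j)) = 0), (twPoly (k' + 1) 1 k' η f).IsRoot (α j) := by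
        intro j hj
        have h1 := (Finset.mem_filter.mp hj).2
        rw [hXc] at h1
        exact h1
      obtain ⟨ha, hb', hc', hd'⟩ := hkey f hf _ hroots
      have hmemJ : ∀ j : Fin m, Stmt14Aux.encMapExt (k' + 1) 1 k' η α b c lam f (Fin.castSucc (Fin.castSucc j)) = 0 →
          j ∈ univ.filter (fun j : Fin m => Stmt14Aux.encMapExt (k' + 1) 1 k' η α b c lam f (Fin.castSucc (Fin.castSucc j)) = 0) :=
        fun j hj => Finset.mem_filter.mpr ⟨Finset.mem_univ _, hj⟩
      by_cases hlamz : Stmt14Aux.encMapExt (k' + 1) 1 k' η α b c lam f (Fin.castSucc (Fin.last m)) = 0 <;>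
        by_cases htopz : Stmt14Aux.encMapExt (k' + 1) 1 k' η α b c lam f (Fin.last (m + 1)) = 0
      · -- both zero
        have hsub : univ.filter (fun i => Stmt14Aux.encMapExt (k' + 1) 1 k' η α b c lam f i = 0) ⊆
            insert (Fin.last (m + 1)) (insert (Fin.castSucc (Fin.last m))
              ((univ.filter (fun j : Fin m =>
                Stmt14Aux.encMapExt (k' + 1) 1 k' η α b c lam f (Fin.castSucc (Fin.castSucc j)) = 0)).image
                (fun j => Fin.castSucc (Fin.castSucc j)))) := by
          intro i hi
          rcases Fin.eq_castSucc_or_eq_last i with ⟨i', rfl⟩ | rfl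
          · rcases Fin.eq_castSucc_or_eq_last i' with ⟨j, rfl⟩ | rfl
            · exact Finset.mem_insert_of_mem (Finset.mem_insert_of_mem
                (Finset.mem_image_of_mem _ (hmemJ j (Finset.mem_filter.mp hi).2)))
            · exact Finset.mem_insert_of_mem (Finset.mem_insert_self _ _)
          · exact Finset.mem_insert_self _ _
        have hc1 := (Finset.card_le_card hsub).trans ((Finset.card_insert_le _ _).trans
          (Nat.add_le_add_right ((Finset.card_insert_le _ _).trans
            (Nat.add_le_add_right Finset.card_image_le 1)) 1))
        have h2 := hXl f
        rw [hlamz] at h2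
        rcases (show (univ.filter (fun j : Fin m =>
            Stmt14Aux.encMapExt (k' + 1) 1 k' η α b c lam f (Fin.castSucc (Fin.castSucc j)) = 0)).card = k' ∨
            (univ.filter (fun j : Fin m =>
            Stmt14Aux.encMapExt (k' + 1) 1 k' η α b c lam f (Fin.castSucc (Fin.castSucc j)) = 0)).card + 1 = k' by omega) with hJc | hJc
        · exact hb' hJc h2.symm
        · have h3 := hXt f
          rw [htopz] at h3
          exact hd' hJc h3.symm h2.symm
      · -- lam zero, top nonzero
        have hsub : univ.filter (fun i => Stmt14Aux.encMapExt (k' + 1) 1 k' η α b c lam f i = 0) ⊆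
            insert (Fin.castSucc (Fin.last m))
              ((univ.filter (fun j : Fin m =>
                Stmt14Aux.encMapExt (k' + 1) 1 k' η α b c lam f (Fin.castSucc (Fin.castSucc j)) = 0)).image
                (fun j => Fin.castSucc (Fin.castSucc j))) := by
          intro i hi
          rcases Fin.eq_castSucc_or_eq_last i with ⟨i', rfl⟩ | rfl
          · rcases Fin.eq_castSucc_or_eq_last i' with ⟨j, rfl⟩ | rfl
            · exact Finset.mem_insert_of_mem
                (Finset.mem_image_of_mem _ (hmemJ j (Finset.mem_filter.mp hi).2))
            · exact Finset.mem_insert_self _ _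
          · exact absurd (Finset.mem_filter.mp hi).2 htopz
        have hc1 := (Finset.card_le_card hsub).trans ((Finset.card_insert_le _ _).trans
          (Nat.add_le_add_right Finset.card_image_le 1))
        have h2 := hXl f
        rw [hlamz] at h2
        exact hb' (by omega) h2.symm
      · -- lam nonzero, top zero
        have hsub : univ.filter (fun i => Stmt14Aux.encMapExt (k' + 1) 1 k' η α b c lam f i = 0) ⊆
            insert (Fin.last (m + 1))
              ((univ.filter (fun j : Fin m =>
                Stmt14Aux.encMapExt (k' + 1) 1 k' η α b c lam f (Fin.castSucc (Fin.castSucc j)) = 0)).image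
                (fun j => Fin.castSucc (Fin.castSucc j))) := by
          intro i hi
          rcases Fin.eq_castSucc_or_eq_last i with ⟨i', rfl⟩ | rfl
          · rcases Fin.eq_castSucc_or_eq_last i' with ⟨j, rfl⟩ | rfl
            · exact Finset.mem_insert_of_mem
                (Finset.mem_image_of_mem _ (hmemJ j (Finset.mem_filter.mp hi).2))
            · exact absurd (Finset.mem_filter.mp hi).2 hlamz
          · exact Finset.mem_insert_self _ _
        have hc1 := (Finset.card_le_card hsub).trans ((Finset.card_insert_le _ _).trans
          (Nat.add_le_add_right Finset.card_image_le 1))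
        have h3 := hXt f
        rw [htopz] at h3
        exact hc' (by omega) h3.symm
      · -- both nonzero
        have hsub : univ.filter (fun i => Stmt14Aux.encMapExt (k' + 1) 1 k' η α b c lam f i = 0) ⊆
            (univ.filter (fun j : Fin m =>
              Stmt14Aux.encMapExt (k' + 1) 1 k' η α b c lam f (Fin.castSucc (Fin.castSucc j)) = 0)).image
              (fun j => Fin.castSucc (Fin.castSucc j)) := by
          intro i hi
          rcases Fin.eq_castSucc_or_eq_last i with ⟨i', rfl⟩ | rfl
          · rcases Fin.eq_castSucc_or_eq_last i' with ⟨j, rfl⟩ | rfl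
            · exact Finset.mem_image_of_mem _ (hmemJ j (Finset.mem_filter.mp hi).2)
            · exact absurd (Finset.mem_filter.mp hi).2 hlamz
          · exact absurd (Finset.mem_filter.mp hi).2 htopz
        have hc1 := (Finset.card_le_card hsub).trans Finset.card_image_le
        omega
end
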